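/- arXiv:0810.3755 — 3 statements merged into one kernel-verified Lean document; each statement's English description precedes it below -/
import Mathlib

section
/- For every B > 0 there is a number C = C(B) > B with the following property. Let γ: [0, ∞) → X be a B-contracting geodesic ray in a proper CAT(0)-space X and let ξ ∈ ∂X − {γ(∞)}. Then every geodesic ζ: ℝ → X connecting ξ = ζ(−∞) to γ(∞) = ζ(∞) passes through the (9B+6)-neighborhood of every point x ∈ π_{γ[0,∞)}(ξ). Moreover, if t ∈ ℝ is such that d(ζ(t), x) ≤ 9B+6 then the geodesic ray ζ[t, ∞) is C-contracting. -/
open Metric Set Filter Topology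
open scoped ENNReal Classical Pointwise

noncomputable section

universe u

/-! ## Proper CAT(0) spaces -/

/-- A geodesic metric space satisfying the CAT(0) comparison inequality
(in the form of the Bruhat–Tits CN-inequality for midpoints). -/
class CAT0Space (X : Type u) [MetricSpace X] : Prop where
  exists_geodesic : ∀ x y : X, ∃ γ : ℝ → X, γ 0 = x ∧ γ (dist x y) = y ∧
    ∀ s ∈ Set.Icc (0 : ℝ) (dist x y), ∀ t ∈ Set.Icc (0 : ℝ) (dist x y),
      dist (γ s) (γ t) = |s - t|
  cn_ineq : ∀ x y z m : X, dist y m = dist y z / 2 → dist z m = dist y z / 2 →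
    dist x m ^ 2 ≤ dist x y ^ 2 / 2 + dist x z ^ 2 / 2 - dist y z ^ 2 / 4

variable {X : Type u} [MetricSpace X]

/-- `γ` restricted to the (closed connected) set `J ⊆ ℝ` is a unit-speed geodesic. -/
def GeodesicOn (γ : ℝ → X) (J : Set ℝ) : Prop :=
  ∀ s ∈ J, ∀ t ∈ J, dist (γ s) (γ t) = |s - t|

/-- The set of points of `A` closest to `x` (the shortest-distance projection of `x` to `A`). -/
def projSet (A : Set X) (x : X) : Set X :=
  {p | p ∈ A ∧ dist x p = Metric.infDist x A}

/-- A geodesic `γ : J → X` is `B`-contracting if the shortest-distance projection to it of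
any closed metric ball disjoint from it has diameter at most `B`. -/
def ContractingOn (B : ℝ) (γ : ℝ → X) (J : Set ℝ) : Prop :=
  GeodesicOn γ J ∧ ∀ (z : X) (r : ℝ),
    Disjoint (Metric.closedBall z r) (γ '' J) →
    EMetric.diam (⋃ x ∈ Metric.closedBall z r, projSet (γ '' J) x) ≤ ENNReal.ofReal B

/-! ## The visual boundary, realized as the horofunction boundary inside `C(X, ℝ)`
(for proper CAT(0)-spaces the two compactifications agree). -/

/-- The embedding `x ↦ (z ↦ d(x,z) - d(x,o))` of `X` into `C(X, ℝ)`. -/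
def bcomp (o : X) (x : X) : C(X, ℝ) :=
  ⟨fun z => dist x z - dist x o, (continuous_const.dist continuous_id).sub continuous_const⟩

/-- The compactification `X ∪ ∂X` of `X`, realized inside `C(X, ℝ)`. -/
def compactifn (o : X) : Set C(X, ℝ) := closure (Set.range (bcomp o))

/-- The visual boundary `∂X` of `X`, realized inside `C(X, ℝ)` as the set of
(normalized) Busemann functions. -/
def bdry (o : X) : Set C(X, ℝ) := closure (Set.range (bcomp o)) \ Set.range (bcomp o)

/-- The natural action of an isometry `g` of `X` on the compactification; on boundary points
it is the induced boundary homeomorphism. -/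
def boundaryAct (o : X) (g : X ≃ᵢ X) (ξ : C(X, ℝ)) : C(X, ℝ) :=
  ⟨fun z => ξ (g.symm z) - ξ (g.symm o),
    (ξ.continuous.comp g.symm.continuous).sub continuous_const⟩

/-- `γ(-∞) = ξ`: the geodesic `γ` emanates from the boundary point `ξ`. -/
def BeginsAt (o : X) (γ : ℝ → X) (ξ : C(X, ℝ)) : Prop :=
  Filter.Tendsto (fun t => bcomp o (γ t)) Filter.atBot (nhds ξ)

/-- `γ(∞) = ξ`: the geodesic (ray) `γ` ends at the boundary point `ξ`. -/
def EndsAt (o : X) (γ : ℝ → X) (ξ : C(X, ℝ)) : Prop :=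
  Filter.Tendsto (fun t => bcomp o (γ t)) Filter.atTop (nhds ξ)

/-- The set of (forward or backward) endpoints at infinity of a geodesic. -/
def endpointsSet (o : X) (γ : ℝ → X) : Set C(X, ℝ) :=
  {ξ | EndsAt o γ ξ ∨ BeginsAt o γ ξ}

/-- Two geodesics share at most one endpoint in `∂X`. -/
def ShareAtMostOneEnd (o : X) (ζ₁ ζ₂ : ℝ → X) : Prop :=
  Set.Subsingleton (endpointsSet o ζ₁ ∩ endpointsSet o ζ₂)

/-- The shortest-distance projection of a boundary point `ξ` to a geodesic `γ : J → X`: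
the set of points of `γ(J)` where the Busemann function of `ξ` restricted to `γ(J)`
attains its minimum. -/
def projSetBdry (γ : ℝ → X) (J : Set ℝ) (ξ : C(X, ℝ)) : Set X :=
  {y | ∃ t ∈ J, y = γ t ∧ ∀ s ∈ J, ξ (γ t) ≤ ξ (γ s)}

/-! ## The isometry group with the compact-open topology -/

instance isometryEquivTopologicalSpace (X : Type u) [MetricSpace X] :
    TopologicalSpace (X ≃ᵢ X) :=
  TopologicalSpace.induced
    (fun g : X ≃ᵢ X =>
      ((⟨⇑g, g.continuous⟩ : C(X, X)), (⟨⇑g.symm, g.symm.continuous⟩ : C(X, X))))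
    inferInstance

/-- The limit set of a subgroup of the isometry group: the set of accumulation points in
`∂X` of an orbit. -/
def limitSet (o : X) (Gs : Subgroup (X ≃ᵢ X)) : Set C(X, ℝ) :=
  bdry o ∩ closure (Set.range fun g : Gs => bcomp o ((g : X ≃ᵢ X) o))

/-- A subgroup of the isometry group is non-elementary if its limit set contains at least
three points and it fixes no point of `∂X`. -/
def IsNonElementary (o : X) (Gs : Subgroup (X ≃ᵢ X)) : Prop :=
  (∃ a ∈ limitSet o Gs, ∃ b ∈ limitSet o Gs, ∃ c ∈ limitSet o Gs, a ≠ b ∧ a ≠ c ∧ b ≠ c) ∧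
  ¬ ∃ ξ ∈ bdry o, ∀ g : Gs, boundaryAct o (g : X ≃ᵢ X) ξ = ξ

/-- A subgroup of the isometry group is elementary if its limit set contains at most two
points or it fixes a point of `∂X`. -/
def IsElementary (o : X) (Gs : Subgroup (X ≃ᵢ X)) : Prop :=
  (∃ a b : C(X, ℝ), limitSet o Gs ⊆ {a, b}) ∨
  ∃ ξ ∈ bdry o, ∀ g : Gs, boundaryAct o (g : X ≃ᵢ X) ξ = ξ

/-- A rank-one isometry: an axial isometry admitting a `B`-contracting axis for some `B > 0`. -/
def IsRankOneIsom (g : X ≃ᵢ X) : Prop :=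
  ∃ (γ : ℝ → X) (τ B : ℝ), 0 < τ ∧ 0 < B ∧ ContractingOn B γ Set.univ ∧
    (∀ t : ℝ, g (γ t) = γ (t + τ)) ∧ ∀ x : X, τ ≤ dist x (g x)

/-- A rank-one isometry together with its attracting fixed point `a` and repelling fixed
point `b` at infinity (the endpoints of a contracting axis). -/
def IsRankOneWithEnds (o : X) (g : X ≃ᵢ X) (a b : C(X, ℝ)) : Prop :=
  ∃ (γ : ℝ → X) (τ B : ℝ), 0 < τ ∧ 0 < B ∧ ContractingOn B γ Set.univ ∧
    (∀ t : ℝ, g (γ t) = γ (t + τ)) ∧ (∀ x : X, τ ≤ dist x (g x)) ∧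
    BeginsAt o γ b ∧ EndsAt o γ a

/-- `G` acts transitively on the complement of the diagonal in `Λ × Λ`. -/
def TransOnPairs (o : X) (Gs : Subgroup (X ≃ᵢ X)) : Prop :=
  ∀ ξ η ξ' η' : C(X, ℝ), ξ ∈ limitSet o Gs → η ∈ limitSet o Gs →
    ξ' ∈ limitSet o Gs → η' ∈ limitSet o Gs → ξ ≠ η → ξ' ≠ η' →
    ∃ g ∈ Gs, boundaryAct o g ξ = ξ' ∧ boundaryAct o g η = η'

/-- The set `𝒜(B)` of ordered pairs of distinct boundary points which are connected by a
`B`-contracting geodesic. -/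
def ABSet (o : X) (B : ℝ) : Set (C(X, ℝ) × C(X, ℝ)) :=
  {p | p.1 ≠ p.2 ∧ ∃ γ : ℝ → X, ContractingOn B γ Set.univ ∧
    BeginsAt o γ p.1 ∧ EndsAt o γ p.2}

/-- The action of an isometry on ordered pairs of boundary points. -/
def pairAct (o : X) (g : X ≃ᵢ X) (p : C(X, ℝ) × C(X, ℝ)) : C(X, ℝ) × C(X, ℝ) :=
  (boundaryAct o g p.1, boundaryAct o g p.2)

/-- The action of an isometry on triples of boundary points. -/
def tripleAct (o : X) (g : X ≃ᵢ X) (t : C(X, ℝ) × C(X, ℝ) × C(X, ℝ)) :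
    C(X, ℝ) × C(X, ℝ) × C(X, ℝ) :=
  (boundaryAct o g t.1, boundaryAct o g t.2.1, boundaryAct o g t.2.2)

/-! ## The quantity `τ_B` -/

/-- The set of parameters where `ζ₁` is `(6B+2)`-close to `ζ₂(J₂)`. -/
def nearSet (B : ℝ) (ζ₁ : ℝ → X) (J₁ : Set ℝ) (ζ₂ : ℝ → X) (J₂ : Set ℝ) : Set ℝ :=
  {t | t ∈ J₁ ∧ Metric.infDist (ζ₁ t) (ζ₂ '' J₂) ≤ 6 * B + 2}

/-- The parameter of the shortest-distance projection of `x` to the geodesic `γ : J → X`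
(the projection point is unique in a CAT(0)-space). -/
def projParam (γ : ℝ → X) (J : Set ℝ) (x : X) : ℝ :=
  sInf {t | t ∈ J ∧ dist x (γ t) = Metric.infDist x (γ '' J)}

/-- The quantity `τ_B(x, ζ₁, ζ₂)` of the paper, measuring the overlap, as seen from the
projections of `x`, of the `(6B+2)`-fellow-travelling portions of the oriented geodesics
`ζ₁ : J₁ → X` and `ζ₂ : J₂ → X`. -/
def tauB (B : ℝ) (x : X) (ζ₁ : ℝ → X) (J₁ : Set ℝ) (ζ₂ : ℝ → X) (J₂ : Set ℝ) : ℝ :=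
  let N₁ := nearSet B ζ₁ J₁ ζ₂ J₂
  let N₂ := nearSet B ζ₂ J₂ ζ₁ J₁
  let p₁ := projParam ζ₁ J₁ x
  let p₂ := projParam ζ₂ J₂ x
  let aE : Set ℝ → EReal := fun N => if BddBelow N then ((sInf N : ℝ) : EReal) else ⊥
  let bE : Set ℝ → EReal := fun N => if BddAbove N then ((sSup N : ℝ) : EReal) else ⊤
  let s₁ : EReal := if BddBelow N₂ then ((projParam ζ₁ J₁ (ζ₂ (sInf N₂)) : ℝ) : EReal) else ⊥
  let t₁ : EReal := if BddAbove N₂ then ((projParam ζ₁ J₁ (ζ₂ (sSup N₂)) : ℝ) : EReal) else ⊤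
  let s₂ : EReal := if BddBelow N₁ then ((projParam ζ₂ J₂ (ζ₁ (sInf N₁)) : ℝ) : EReal) else ⊥
  let t₂ : EReal := if BddAbove N₁ then ((projParam ζ₂ J₂ (ζ₁ (sSup N₁)) : ℝ) : EReal) else ⊤
  let dA₁ : ℝ≥0∞ := if BddBelow N₁ then ENNReal.ofReal (dist (ζ₁ p₁) (ζ₁ (sInf N₁))) else ⊤
  let dB₁ : ℝ≥0∞ := if BddAbove N₁ then ENNReal.ofReal (dist (ζ₁ p₁) (ζ₁ (sSup N₁))) else ⊤
  let dA₂ : ℝ≥0∞ := if BddBelow N₂ then ENNReal.ofReal (dist (ζ₂ p₂) (ζ₂ (sInf N₂))) else ⊤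
  let dB₂ : ℝ≥0∞ := if BddAbove N₂ then ENNReal.ofReal (dist (ζ₂ p₂) (ζ₂ (sSup N₂))) else ⊤
  if N₁.Nonempty ∧ N₂.Nonempty ∧ s₁ < t₁ ∧ s₂ < t₂ ∧
      aE N₁ ≤ (p₁ : EReal) ∧ (p₁ : EReal) ≤ bE N₁ ∧
      aE N₂ ≤ (p₂ : EReal) ∧ (p₂ : EReal) ≤ bE N₂ then
    (min (min dA₁ dB₁) (min dA₂ dB₂)).toReal
  else 0

/-- `τ_B(x, α₁, α₂)` for pairs `α₁, α₂ ∈ 𝒜(B)`: the infimum of `τ_B(x, ζ₁, ζ₂)` over all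
`B`-contracting geodesics `ζᵢ` connecting the two components of `αᵢ`. -/
def tauBPair (o : X) (B : ℝ) (x : X) (α₁ α₂ : C(X, ℝ) × C(X, ℝ)) : ℝ :=
  sInf {r | ∃ ζ₁ ζ₂ : ℝ → X,
    ContractingOn B ζ₁ Set.univ ∧ BeginsAt o ζ₁ α₁.1 ∧ EndsAt o ζ₁ α₁.2 ∧
    ContractingOn B ζ₂ Set.univ ∧ BeginsAt o ζ₂ α₂.1 ∧ EndsAt o ζ₂ α₂.2 ∧
    r = tauB B x ζ₁ Set.univ ζ₂ Set.univ}

/-- The Gromov-product-like kernel `δ̃_x(α₁, α₂) = e^{-χ τ_B(x, α₁, α₂)}` on `𝒜(B)`. -/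
def tildeDelta (o : X) (B χ : ℝ) (x : X) (α β : C(X, ℝ) × C(X, ℝ)) : ℝ :=
  if α = β then 0 else Real.exp (-(χ * tauBPair o B x α β))

/-- The family of distances `{δ_x}` on `𝒜(B)` of Corollary `deltadistance`:
a family of genuine distance functions inducing the subspace topology, invariant under the
involution `ι` and the isometry group, uniformly comparable to `δ̃_x`, and moving
uniformly Lipschitz-continuously (in the multiplicative sense) with the basepoint `x`. -/
def IsDeltaFamily (o : X) (B χ c₀ : ℝ)
    (δ : X → ↥(ABSet o B) → ↥(ABSet o B) → ℝ) : Prop :=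
  (∀ x α β, 0 ≤ δ x α β) ∧
  (∀ x α β, δ x α β = 0 ↔ α = β) ∧
  (∀ x α β, δ x α β = δ x β α) ∧
  (∀ x α β γ', δ x α γ' ≤ δ x α β + δ x β γ') ∧
  (∀ (x : X) (s : Set ↥(ABSet o B)),
      IsOpen s ↔ ∀ a ∈ s, ∃ ε > 0, ∀ b, δ x a b < ε → b ∈ s) ∧
  (∀ (x : X) (a : ↥(ABSet o B)), ∃ ε > 0, IsCompact {b | δ x a b ≤ ε}) ∧
  (∀ (x : X) (α β : ↥(ABSet o B)) (hα : ((α : C(X, ℝ) × C(X, ℝ)).2,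
      (α : C(X, ℝ) × C(X, ℝ)).1) ∈ ABSet o B)
      (hβ : ((β : C(X, ℝ) × C(X, ℝ)).2, (β : C(X, ℝ) × C(X, ℝ)).1) ∈ ABSet o B),
      δ x ⟨((α : C(X, ℝ) × C(X, ℝ)).2, (α : C(X, ℝ) × C(X, ℝ)).1), hα⟩
        ⟨((β : C(X, ℝ) × C(X, ℝ)).2, (β : C(X, ℝ) × C(X, ℝ)).1), hβ⟩ = δ x α β) ∧
  (∀ (x : X) (α β : ↥(ABSet o B)),
      c₀ * tildeDelta o B χ x (↑α) (↑β) ≤ δ x α β ∧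
      δ x α β ≤ tildeDelta o B χ x (↑α) (↑β)) ∧
  (∀ (x y : X) (α β : ↥(ABSet o B)),
      Real.exp (-(χ * dist x y)) * δ x α β ≤ δ y α β ∧
      δ y α β ≤ Real.exp (χ * dist x y) * δ x α β) ∧
  (∀ (g : X ≃ᵢ X) (x : X) (α β : ↥(ABSet o B))
      (hα : pairAct o g (↑α) ∈ ABSet o B) (hβ : pairAct o g (↑β) ∈ ABSet o B),
      δ (g x) ⟨pairAct o g (↑α), hα⟩ ⟨pairAct o g (↑β), hβ⟩ = δ x α β)

/-! ## Amenability, compact extensions, Lie groups -/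

/-- A topological group is amenable if there is a left-invariant mean on the space of
bounded continuous real functions. -/
def IsAmenableGroup (H : Type u) [Group H] [TopologicalSpace H] : Prop :=
  ∃ m : BoundedContinuousFunction H ℝ →ₗ[ℝ] ℝ,
    m 1 = 1 ∧ (∀ f : BoundedContinuousFunction H ℝ, 0 ≤ f → 0 ≤ m f) ∧
    ∀ (g : H) (f f' : BoundedContinuousFunction H ℝ),
      (∀ x, f' x = f (g * x)) → m f' = m f

/-- A realization of a topological group `G` as a compact extension: a compact normal
subgroup `K` together with a topological group isomorphism `G ⧸ K ≃ L`. -/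
structure CompactExtension (G : Type u) [Group G] [TopologicalSpace G] where
  L : Type u
  [grp : Group L]
  [top : TopologicalSpace L]
  K : Subgroup G
  normal : K.Normal
  isCompact : IsCompact (K : Set G)
  e : (G ⧸ K) ≃* L
  continuous_e : Continuous ⇑e
  continuous_symm : Continuous ⇑e.symm

attribute [instance] CompactExtension.grp CompactExtension.top

/-- Gromov hyperbolicity via the four-point condition. -/
def GromovHyperbolicSpace (Y : Type u) [MetricSpace Y] : Prop :=
  ∃ δ : ℝ, 0 ≤ δ ∧ ∀ x y z w : Y,
    dist x y + dist z w ≤ max (dist x z + dist y w) (dist x w + dist y z) + δ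

/-- A witness that `L` is a rank-one simple Lie group: a faithful continuous, proper,
transitive, isometric action on a non-trivial Gromov hyperbolic proper CAT(0)-space
(its rank-one symmetric space). -/
structure RankOneWitness (L : Type u) [Group L] [TopologicalSpace L] where
  Y : Type u
  [ms : MetricSpace Y]
  proper : ProperSpace Y
  cat0 : CAT0Space Y
  hyperbolic : GromovHyperbolicSpace Y
  nontrivial : ∃ y₀ y₁ : Y, y₀ ≠ y₁
  act : L →* (Y ≃ᵢ Y)
  faithful : Function.Injective ⇑act
  continuous_act : Continuous fun p : L × Y => act p.1 p.2
  proper_act : ∀ K : Set Y, IsCompact K →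
    IsCompact (closure {g : L | ¬ Disjoint (⇑(act g) '' K) K})
  transitive : ∀ y y' : Y, ∃ g : L, act g y = y'

attribute [instance] RankOneWitness.ms

/-- A simple Lie group of rank one (with trivial center), characterized geometrically:
a connected, locally compact, non-compact, topologically simple group acting continuously,
faithfully, properly, transitively and isometrically on a non-trivial Gromov hyperbolic
proper CAT(0)-space. -/
def IsRankOneSimpleLie (L : Type u) [Group L] [TopologicalSpace L] : Prop :=
  IsTopologicalGroup L ∧ ConnectedSpace L ∧ LocallyCompactSpace L ∧ ¬ CompactSpace L ∧
  (∀ N : Subgroup L, N.Normal → IsClosed (N : Set L) → N = ⊥ ∨ N = ⊤) ∧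
  Nonempty (RankOneWitness L)

/-- A witness that `G` is a semisimple Lie group of rank at least two: a continuous, proper,
transitive, isometric action on a proper CAT(0)-space (its symmetric space) which contains
a 2-flat. -/
structure HigherRankWitness (G : Type u) [Group G] [TopologicalSpace G] where
  Y : Type u
  [ms : MetricSpace Y]
  proper : ProperSpace Y
  cat0 : CAT0Space Y
  act : G →* (Y ≃ᵢ Y)
  continuous_act : Continuous fun p : G × Y => act p.1 p.2
  proper_act : ∀ K : Set Y, IsCompact K →
    IsCompact (closure {g : G | ¬ Disjoint (⇑(act g) '' K) K})
  transitive : ∀ y y' : Y, ∃ g : G, act g y = y'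
  twoFlat : ∃ f : ℝ × ℝ → Y, ∀ p q : ℝ × ℝ,
    dist (f p) (f q) = Real.sqrt ((p.1 - q.1) ^ 2 + (p.2 - q.2) ^ 2)

attribute [instance] HigherRankWitness.ms

/-- A connected semisimple Lie group with finite center, no compact factors, and real rank
at least two, characterized geometrically: a connected locally compact group with finite
center whose closed normal amenable subgroups are finite, acting continuously, properly,
transitively and isometrically on a proper CAT(0)-space containing a 2-flat. -/
def IsHigherRankSemisimpleLie (G : Type u) [Group G] [TopologicalSpace G] : Prop :=
  IsTopologicalGroup G ∧ ConnectedSpace G ∧ LocallyCompactSpace G ∧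
  Finite (Subgroup.center G) ∧
  (∀ N : Subgroup G, N.Normal → IsClosed (N : Set G) → IsAmenableGroup ↥N → Finite ↥N) ∧
  Nonempty (HigherRankWitness G)

/-- A lattice in a locally compact group: a discrete subgroup of finite covolume. -/
def IsLatticeIn (G : Type u) [Group G] [TopologicalSpace G] (Γ : Subgroup G) : Prop :=
  DiscreteTopology ↥Γ ∧ IsClosed (Γ : Set G) ∧
  ∃ μ : @MeasureTheory.Measure G (borel G),
    @MeasureTheory.Measure.IsHaarMeasure G _ _ (borel G) μ ∧
    ∃ F : Set G, @MeasurableSet G (borel G) F ∧ μ F < ⊤ ∧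
      (⋃ γ ∈ Γ, (fun x => x * γ) '' F) = Set.univ

/-- An irreducible lattice: the projection of `Γ` to the quotient by every proper
(non-discrete) closed normal subgroup is dense. -/
def IsIrreducibleLattice (G : Type u) [Group G] [TopologicalSpace G] (Γ : Subgroup G) : Prop :=
  ∀ N : Subgroup G, N.Normal → IsClosed (N : Set G) → ¬ DiscreteTopology ↥N →
    Dense ((N : Set G) * (Γ : Set G))

/-! ## Bounded cohomology in degree two with coefficients in `L^p(G, μ)` -/

section Cohomology

variable {G : Type u} [Group G] [MeasurableSpace G]

/-- A bounded `G`-equivariant `L^p(G,μ)`-valued 2-cochain (for the homogeneous resolution),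
described by its values: a function `G² → L^p(G, μ)` which is uniformly `L^p`-bounded and
equivariant for the left regular representation. -/
def IsBddEquivariantCochain2 (μ : MeasureTheory.Measure G) (p : ℝ≥0∞)
    (φ : G → G → G → ℝ) : Prop :=
  (∀ g₀ g₁, MeasureTheory.MemLp (φ g₀ g₁) p μ) ∧
  (∃ C : ℝ≥0∞, C ≠ ⊤ ∧ ∀ g₀ g₁, MeasureTheory.eLpNorm (φ g₀ g₁) p μ ≤ C) ∧
  (∀ g g₀ g₁, (fun h => φ (g * g₀) (g * g₁) h) =ᵐ[μ] fun h => φ g₀ g₁ (g⁻¹ * h))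

/-- A bounded `G`-equivariant `L^p(G,μ)`-valued 3-cochain. -/
def IsBddEquivariantCochain3 (μ : MeasureTheory.Measure G) (p : ℝ≥0∞)
    (ω : G → G → G → G → ℝ) : Prop :=
  (∀ g₀ g₁ g₂, MeasureTheory.MemLp (ω g₀ g₁ g₂) p μ) ∧
  (∃ C : ℝ≥0∞, C ≠ ⊤ ∧ ∀ g₀ g₁ g₂, MeasureTheory.eLpNorm (ω g₀ g₁ g₂) p μ ≤ C) ∧
  (∀ g g₀ g₁ g₂, (fun h => ω (g * g₀) (g * g₁) (g * g₂) h) =ᵐ[μ] fun h => ω g₀ g₁ g₂ (g⁻¹ * h))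

/-- The homogeneous 2-cocycle identity. -/
def IsCocycle3 (μ : MeasureTheory.Measure G) (ω : G → G → G → G → ℝ) : Prop :=
  ∀ g₀ g₁ g₂ g₃,
    (fun h => ω g₁ g₂ g₃ h - ω g₀ g₂ g₃ h + ω g₀ g₁ g₃ h - ω g₀ g₁ g₂ h)
      =ᵐ[μ] fun _ => (0 : ℝ)

/-- `ω` is the coboundary of the 2-cochain `φ`. -/
def IsCoboundaryOf (μ : MeasureTheory.Measure G) (ω : G → G → G → G → ℝ)
    (φ : G → G → G → ℝ) : Prop :=
  ∀ g₀ g₁ g₂, ω g₀ g₁ g₂ =ᵐ[μ] fun h => φ g₁ g₂ h - φ g₀ g₂ h + φ g₀ g₁ h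

/-- Non-vanishing of `H²_b(G, L^p(G, μ))` (with `G` regarded as a discrete group):
there is a bounded equivariant cocycle which is not the coboundary of any bounded
equivariant cochain. -/
def H2bNontrivial (μ : MeasureTheory.Measure G) (p : ℝ≥0∞) : Prop :=
  ∃ ω : G → G → G → G → ℝ, IsBddEquivariantCochain3 μ p ω ∧ IsCocycle3 μ ω ∧
    ¬ ∃ φ : G → G → G → ℝ, IsBddEquivariantCochain2 μ p φ ∧ IsCoboundaryOf μ ω φ

/-- Infinite-dimensionality of `H²_b(G, L^p(G, μ))`: a sequence of bounded equivariant
cocycles whose classes are linearly independent. -/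
def H2bInfiniteDimensional (μ : MeasureTheory.Measure G) (p : ℝ≥0∞) : Prop :=
  ∃ ω : ℕ → G → G → G → G → ℝ,
    (∀ n, IsBddEquivariantCochain3 μ p (ω n) ∧ IsCocycle3 μ (ω n)) ∧
    ∀ (s : Finset ℕ) (c : ℕ → ℝ),
      (∃ φ : G → G → G → ℝ, IsBddEquivariantCochain2 μ p φ ∧
        IsCoboundaryOf μ (fun g₀ g₁ g₂ h => ∑ n ∈ s, c n * ω n g₀ g₁ g₂ h) φ) →
      ∀ n ∈ s, c n = 0

variable [TopologicalSpace G]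

/-- Continuity of a 2-cochain as a map `G² → L^p(G, μ)`. -/
def IsLpContinuous2 (μ : MeasureTheory.Measure G) (p : ℝ≥0∞) (φ : G → G → G → ℝ) : Prop :=
  ∀ t₀ : G × G, Filter.Tendsto
    (fun t : G × G => MeasureTheory.eLpNorm (fun h => φ t.1 t.2 h - φ t₀.1 t₀.2 h) p μ)
    (nhds t₀) (nhds 0)

/-- Continuity of a 3-cochain as a map `G³ → L^p(G, μ)`. -/
def IsLpContinuous3 (μ : MeasureTheory.Measure G) (p : ℝ≥0∞) (ω : G → G → G → G → ℝ) : Prop :=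
  ∀ t₀ : G × G × G, Filter.Tendsto
    (fun t : G × G × G =>
      MeasureTheory.eLpNorm (fun h => ω t.1 t.2.1 t.2.2 h - ω t₀.1 t₀.2.1 t₀.2.2 h) p μ)
    (nhds t₀) (nhds 0)

/-- Non-vanishing of the continuous bounded cohomology `H²_cb(G, L^p(G, μ))`. -/
def H2cbNontrivial (μ : MeasureTheory.Measure G) (p : ℝ≥0∞) : Prop :=
  ∃ ω : G → G → G → G → ℝ, IsBddEquivariantCochain3 μ p ω ∧ IsLpContinuous3 μ p ω ∧
    IsCocycle3 μ ω ∧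
    ¬ ∃ φ : G → G → G → ℝ, IsBddEquivariantCochain2 μ p φ ∧ IsLpContinuous2 μ p φ ∧
      IsCoboundaryOf μ ω φ

end Cohomology

/-! ## Triples and the cocycle of Theorem `cocycle` -/

/-- The set `T(B)` of triples of pairwise distinct points of the limit set whose pairs are
connected by `B`-contracting geodesics. -/
def TSet (o : X) (Gs : Subgroup (X ≃ᵢ X)) (B : ℝ) :
    Set (C(X, ℝ) × C(X, ℝ) × C(X, ℝ)) :=
  {t | t.1 ∈ limitSet o Gs ∧ t.2.1 ∈ limitSet o Gs ∧ t.2.2 ∈ limitSet o Gs ∧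
    (t.1, t.2.1) ∈ ABSet o B ∧ (t.2.1, t.2.2) ∈ ABSet o B ∧ (t.2.2, t.1) ∈ ABSet o B}

/-- The set of triples of pairwise distinct points of the limit set. -/
def TripleSet (o : X) (Gs : Subgroup (X ≃ᵢ X)) : Set (C(X, ℝ) × C(X, ℝ) × C(X, ℝ)) :=
  {t | t.1 ∈ limitSet o Gs ∧ t.2.1 ∈ limitSet o Gs ∧ t.2.2 ∈ limitSet o Gs ∧
    t.1 ≠ t.2.1 ∧ t.1 ≠ t.2.2 ∧ t.2.1 ≠ t.2.2}

/-- The 2-cocycle `ω(σ, η, β) = α(σ, η) + α(η, β) + α(β, σ)` associated to a map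
`α : 𝒜(B) → C_b(G × G)`. -/
def omegaOf {o : X} {Gs : Subgroup (X ≃ᵢ X)} {B : ℝ}
    (α : ↥(ABSet o B) → BoundedContinuousFunction (↥Gs × ↥Gs) ℝ)
    (τ : ↥(TSet o Gs B)) : ↥Gs × ↥Gs → ℝ :=
  fun z =>
    α ⟨((τ : C(X, ℝ) × C(X, ℝ) × C(X, ℝ)).1, (τ : C(X, ℝ) × C(X, ℝ) × C(X, ℝ)).2.1),
        τ.2.2.2.2.1⟩ z +
    α ⟨((τ : C(X, ℝ) × C(X, ℝ) × C(X, ℝ)).2.1, (τ : C(X, ℝ) × C(X, ℝ) × C(X, ℝ)).2.2),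
        τ.2.2.2.2.2.1⟩ z +
    α ⟨((τ : C(X, ℝ) × C(X, ℝ) × C(X, ℝ)).2.2, (τ : C(X, ℝ) × C(X, ℝ) × C(X, ℝ)).1),
        τ.2.2.2.2.2.2⟩ z

/-- The subset `𝒫_{≥3}(Λ)` of probability measures on the compactification which are
supported on `Λ` and not concentrated on at most two points. -/
def PThree (o : X) (Gs : Subgroup (X ≃ᵢ X)) [MeasurableSpace C(X, ℝ)] :
    Set (MeasureTheory.ProbabilityMeasure C(X, ℝ)) :=
  {ν | ν.toMeasure (limitSet o Gs)ᶜ = 0 ∧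
    ∀ a b : C(X, ℝ), ν.toMeasure {a, b} < 1}

/-! ## Hadamard-manifold notions for Corollary `rankrig` -/

/-- Geodesic completeness: every nontrivial geodesic segment extends to a biinfinite
geodesic line. -/
def GeodesicallyComplete (X : Type u) [MetricSpace X] : Prop :=
  ∀ (γ : ℝ → X) (a b : ℝ), a < b → GeodesicOn γ (Set.Icc a b) →
    ∃ γ' : ℝ → X, GeodesicOn γ' Set.univ ∧ ∀ t ∈ Set.Icc a b, γ' t = γ t

/-- `X` is a (globally) symmetric space: the geodesic symmetry at every point extends to
an isometry of `X`. -/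
def IsSymmetricSpace (X : Type u) [MetricSpace X] : Prop :=
  ∀ p : X, ∃ σ : X ≃ᵢ X, σ p = p ∧
    ∀ γ : ℝ → X, GeodesicOn γ Set.univ → γ 0 = p → ∀ t : ℝ, σ (γ t) = γ (-t)

/-- `X` is irreducible: it is not isometric to a non-trivial product (with the
Pythagorean/ℓ² product metric). -/
def IsIrreducibleMetricSpace (X : Type u) [MetricSpace X] : Prop :=
  ¬ ∃ (Y Z : Type u) (_ : MetricSpace Y) (_ : MetricSpace Z) (f : X ≃ Y × Z),
      (∃ y y' : Y, y ≠ y') ∧ (∃ z z' : Z, z ≠ z') ∧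
      ∀ a b : X, dist a b ^ 2 =
        dist (f a).1 (f b).1 ^ 2 + dist (f a).2 (f b).2 ^ 2

/-- An isometry is parabolic if its displacement function does not attain its infimum. -/
def IsParabolicIsom (g : X ≃ᵢ X) : Prop :=
  ¬ ∃ x : X, ∀ y : X, dist x (g x) ≤ dist y (g y)


/-! Write `π` for the nearest-point projection to `γ`. Contraction makes the broken path from
`w` through `γ (π w)` to `γ u` almost geodesic; letting `u → ∞` compares the Busemann function
of `η = γ(∞)` at `w` and at `γ (π w)`. As `ζ` also ends at `η`, this pins `π (ζ σ)` to `σ - E`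
up to `d(ζ σ, γ)`, for the fixed shift `E = levelShift η γ ζ`.

Since `γ t₀` minimises the Busemann function of `ξ = ζ(-∞)`, the projections of the points
`ζ s` cannot stay `2B + 3` away from `t₀` as `s → -∞`, and one step along `ζ` towards `γ` gives a point `9B + 6`
close to `γ t₀`. From such a point `ζ t`, the ray `ζ[t, ∞)` stays `18B + 12`-close to `γ`, and
the projection of any `w` to it has parameter `t + max (π w - (t - E)) 0` up to `O(B)`. A coarse
intermediate value argument along a segment `[z, w]` shows that this quantity varies by `O(B)`
over a ball disjoint from `ζ[t, ∞)`. -/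

theorem LipschitzWith.le_add_of_gaps_le {g : ℝ → ℝ} (hg : LipschitzWith 1 g) {θ L : ℝ}
    (hgap : ∀ σ, g σ ≤ θ → ∃ Δ, 0 < Δ ∧ Δ ≤ L ∧ g (σ + Δ) ≤ θ) {τ σ : ℝ} (hτ : g τ ≤ θ)
    (hσ : τ ≤ σ) : g σ ≤ θ + L := by
  set S := Icc τ σ ∩ {s | g s ≤ θ}
  have hτS : τ ∈ S := ⟨⟨le_rfl, hσ⟩, hτ⟩
  have hbdd : BddAbove S := ⟨σ, fun s hs => hs.1.2⟩
  have hsS : sSup S ∈ S :=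
    (isClosed_Icc.inter (isClosed_le hg.continuous continuous_const)).csSup_mem ⟨τ, hτS⟩ hbdd
  have hτs : τ ≤ sSup S := le_csSup hbdd hτS
  have hgs : g (sSup S) ≤ θ := hsS.2
  rcases le_or_gt (σ - sSup S) L with hnear | hfar
  · have hlip := hg.dist_le_mul σ (sSup S)
    rw [NNReal.coe_one, one_mul, Real.dist_eq, Real.dist_eq,
      abs_of_nonneg (sub_nonneg.2 hsS.1.2)] at hlip
    linarith [le_abs_self (g σ - g (sSup S))]
  · obtain ⟨Δ, hΔ, hΔL, hgΔ⟩ := hgap _ hgs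
    have := le_csSup hbdd ⟨⟨by linarith, by linarith⟩, hgΔ⟩
    linarith

/-- A coarse intermediate value theorem. -/
theorem exists_lt_le_of_le_add_abs_sub {f : ℝ → ℝ} {L M K v : ℝ} (hL : 0 ≤ L) (hM : 0 ≤ M)
    (hf : ∀ x ∈ Icc 0 L, ∀ y ∈ Icc 0 L, f y ≤ f x + M * |x - y| + K)
    (h₀ : f 0 ≤ v) (hv : v < f L) : ∃ τ ∈ Icc 0 L, v < f τ ∧ f τ ≤ v + 2 * M + K := by
  set S := {τ | τ ∈ Icc 0 L ∧ f τ ≤ v}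
  have h0S : 0 ∈ S := ⟨⟨le_rfl, hL⟩, h₀⟩
  have hbdd : BddAbove S := ⟨L, fun τ hτ => hτ.1.2⟩
  obtain ⟨τ, hτS, hτs⟩ := exists_lt_of_lt_csSup ⟨0, h0S⟩ (sub_one_lt (sSup S))
  have hτle : τ ≤ sSup S := le_csSup hbdd hτS
  have hsL : sSup S ≤ L := csSup_le ⟨0, h0S⟩ fun τ hτ => hτ.1.2
  have hτ' : min (sSup S + 1) L ∈ Icc 0 L :=
    ⟨le_min (by linarith [hτS.1.1]) hL, min_le_right _ _⟩
  refine ⟨_, hτ', ?_, ?_⟩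
  · by_contra! hle
    have := le_csSup hbdd ⟨hτ', hle⟩
    rcases min_cases (sSup S + 1) L with ⟨hmin, -⟩ | ⟨hmin, -⟩ <;> rw [hmin] at this hle
    · linarith
    · linarith
  · have hτm : τ ≤ min (sSup S + 1) L := le_min (by linarith) hτS.1.2
    have hdist : |τ - min (sSup S + 1) L| ≤ 2 := by
      rw [abs_sub_comm, abs_of_nonneg (sub_nonneg.2 hτm)]
      linarith [min_le_left (sSup S + 1) L]
    linarith [hf τ hτS.1 _ hτ', hτS.2, mul_le_mul_of_nonneg_left hdist hM]

namespace GeodesicOn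

variable {c : ℝ → X} {a : ℝ}

theorem mono {I J : Set ℝ} (h : GeodesicOn c J) (hIJ : I ⊆ J) : GeodesicOn c I :=
  fun s hs t ht => h s (hIJ hs) t (hIJ ht)

theorem isometry_domRestrict {J : Set ℝ} (h : GeodesicOn c J) : Isometry (J.domRestrict c) :=
  Isometry.of_dist_eq fun s t => (h s s.2 t t.2).trans (Real.dist_eq _ _).symm

theorem isometry (h : GeodesicOn c univ) : Isometry c :=
  Isometry.of_dist_eq fun s t => (h s trivial t trivial).trans (Real.dist_eq s t).symm

theorem dist_add (h : GeodesicOn c univ) (s : ℝ) {Δ : ℝ} (hΔ : 0 ≤ Δ) :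
    dist (c s) (c (s + Δ)) = Δ := by
  rw [h s trivial _ trivial, sub_add_cancel_left, abs_neg, abs_of_nonneg hΔ]

theorem lipschitzWith_infDist (h : GeodesicOn c univ) (A : Set X) :
    LipschitzWith 1 fun s => infDist (c s) A := by
  have := (lipschitz_infDist_pt A).comp h.isometry.lipschitz
  rwa [mul_one] at this

theorem isClosed_image_Ici (h : GeodesicOn c (Ici a)) : IsClosed (c '' Ici a) := by
  have : CompleteSpace (Ici a) := isClosed_Ici.completeSpace_coe
  rw [← range_domRestrict]
  exact h.isometry_domRestrict.isUniformInducing.isComplete_range.isClosed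

theorem projParam_spec [ProperSpace X] (h : GeodesicOn c (Ici a)) (w : X) :
    a ≤ projParam c (Ici a) w ∧
      dist w (c (projParam c (Ici a) w)) = infDist w (c '' Ici a) := by
  obtain ⟨_, ⟨s, hs, rfl⟩, hd⟩ :=
    h.isClosed_image_Ici.exists_infDist_eq_dist (nonempty_Ici.image c) w
  have hcont : ContinuousOn (fun t => dist w (c t)) (Ici a) :=
    (continuous_const.dist continuous_id).comp_continuousOn
      (continuousOn_iff_continuous_domRestrict.2 h.isometry_domRestrict.continuous)
  exact (hcont.preimage_isClosed_of_isClosed isClosed_Ici isClosed_singleton).csInf_mem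
    ⟨s, hs, hd.symm⟩ ⟨a, fun _ ht => ht.1⟩

theorem le_projParam [ProperSpace X] (h : GeodesicOn c (Ici a)) (w : X) :
    a ≤ projParam c (Ici a) w :=
  (h.projParam_spec w).1

theorem dist_projParam [ProperSpace X] (h : GeodesicOn c (Ici a)) (w : X) :
    dist w (c (projParam c (Ici a) w)) = infDist w (c '' Ici a) :=
  (h.projParam_spec w).2

theorem projParam_mem_projSet [ProperSpace X] (h : GeodesicOn c (Ici a)) (w : X) :
    c (projParam c (Ici a) w) ∈ projSet (c '' Ici a) w :=
  ⟨mem_image_of_mem c (h.le_projParam w), h.dist_projParam w⟩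

theorem dist_le_infDist_add_abs_projParam_sub [ProperSpace X] (h : GeodesicOn c (Ici a))
    (w : X) {u : ℝ} (hu : a ≤ u) :
    dist w (c u) ≤ infDist w (c '' Ici a) + |projParam c (Ici a) w - u| := by
  rw [← h.dist_projParam w, ← h _ (h.le_projParam w) u hu]
  exact dist_triangle _ _ _

theorem abs_projParam_sub_le [ProperSpace X] (h : GeodesicOn c (Ici a)) (w : X) {u : ℝ}
    (hu : a ≤ u) : |projParam c (Ici a) w - u| ≤ infDist w (c '' Ici a) + dist w (c u) := by
  rw [← h _ (h.le_projParam w) u hu, ← h.dist_projParam w, dist_comm w]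
  exact dist_triangle _ _ _

theorem dist_midpoint_sq_le [CAT0Space X] (h : GeodesicOn c (Ici a)) {s t : ℝ} (hs : a ≤ s)
    (ht : a ≤ t) (w : X) :
    dist w (c ((s + t) / 2)) ^ 2 ≤
      dist w (c s) ^ 2 / 2 + dist w (c t) ^ 2 / 2 - dist (c s) (c t) ^ 2 / 4 := by
  have hm : a ≤ (s + t) / 2 := by linarith
  refine CAT0Space.cn_ineq w (c s) (c t) _ ?_ ?_
  · rw [h s hs _ hm, h s hs t ht, show s - (s + t) / 2 = (s - t) / 2 by ring, abs_div,
      abs_two]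
  · rw [h t ht _ hm, h s hs t ht, show t - (s + t) / 2 = (t - s) / 2 by ring, abs_div,
      abs_two, abs_sub_comm]

theorem eq_of_dist_eq_infDist [CAT0Space X] (h : GeodesicOn c (Ici a)) {w : X} {s t : ℝ}
    (hs : a ≤ s) (ht : a ≤ t) (hws : dist w (c s) = infDist w (c '' Ici a))
    (hwt : dist w (c t) = infDist w (c '' Ici a)) : s = t := by
  have hmid : infDist w (c '' Ici a) ≤ dist w (c ((s + t) / 2)) :=
    infDist_le_dist_of_mem (mem_image_of_mem c (by simp only [mem_Ici]; linarith))
  have hcn := h.dist_midpoint_sq_le hs ht w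
  have hst : dist (c s) (c t) = 0 := by
    nlinarith [dist_nonneg (x := c s) (y := c t), infDist_nonneg (x := w) (s := c '' Ici a)]
  rw [h s hs t ht, abs_eq_zero, sub_eq_zero] at hst
  exact hst

theorem eq_projParam_of_mem_projSet [ProperSpace X] [CAT0Space X] (h : GeodesicOn c (Ici a))
    {w p : X} (hp : p ∈ projSet (c '' Ici a) w) : p = c (projParam c (Ici a) w) := by
  obtain ⟨⟨s, hs, rfl⟩, hd⟩ := hp
  rw [h.eq_of_dist_eq_infDist hs (h.le_projParam w) hd (h.dist_projParam w)]

end GeodesicOn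

theorem CAT0Space.exists_dist_eq_of_le [CAT0Space X] (x y : X) {s : ℝ} (hs₀ : 0 ≤ s)
    (hs : s ≤ dist x y) : ∃ p, dist x p = s ∧ dist p y = dist x y - s := by
  obtain ⟨σ, hσ₀, hσ₁, hσ⟩ := CAT0Space.exists_geodesic x y
  refine ⟨σ s, ?_, ?_⟩
  · rw [← hσ₀, hσ 0 ⟨le_rfl, dist_nonneg⟩ s ⟨hs₀, hs⟩, zero_sub, abs_neg, abs_of_nonneg hs₀]
  · have hσy := hσ s ⟨hs₀, hs⟩ _ ⟨dist_nonneg, le_rfl⟩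
    rw [hσ₁, abs_sub_comm, abs_of_nonneg (sub_nonneg.2 hs)] at hσy
    exact hσy

namespace ContractingOn

variable [ProperSpace X] {B a : ℝ} {c : ℝ → X}

theorem abs_projParam_sub_le_of_dist_lt (hcon : ContractingOn B c (Ici a)) (hB : 0 ≤ B)
    {w w' : X} (hd : dist w w' < infDist w (c '' Ici a)) :
    |projParam c (Ici a) w - projParam c (Ici a) w'| ≤ B := by
  have h := hcon.1
  have hdisj : Disjoint (closedBall w (dist w w')) (c '' Ici a) :=
    disjoint_left.2 fun p hp hpc =>
      (infDist_le_dist_of_mem hpc).not_gt ((mem_closedBall'.1 hp).trans_lt hd)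
  have hmem : ∀ x ∈ closedBall w (dist w w'),
      c (projParam c (Ici a) x) ∈ ⋃ x ∈ closedBall w (dist w w'), projSet (c '' Ici a) x :=
    fun x hx => mem_biUnion hx (h.projParam_mem_projSet x)
  have hdiam := (edist_le_ediam_of_mem (hmem w (mem_closedBall_self dist_nonneg))
    (hmem w' (mem_closedBall'.2 le_rfl))).trans (hcon.2 w _ hdisj)
  rwa [edist_dist, ENNReal.ofReal_le_ofReal_iff hB,
    h _ (h.le_projParam w) _ (h.le_projParam w')] at hdiam

variable [CAT0Space X]

/-- The broken path from `w` to `c u` through the projection of `w` is almost geodesic. -/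
theorem abs_projParam_sub_le_dist_sub_infDist (hcon : ContractingOn B c (Ici a)) (hB : 0 < B)
    (w : X) {u : ℝ} (hu : a ≤ u) :
    |projParam c (Ici a) w - u| ≤ dist w (c u) - infDist w (c '' Ici a) + 2 * B + 2 := by
  have h := hcon.1
  have hgD : ∀ w : X, infDist w (c '' Ici a) ≤ dist w (c u) :=
    fun w => infDist_le_dist_of_mem (mem_image_of_mem c hu)
  have hnear : ∀ w : X, |projParam c (Ici a) w - u| ≤ infDist w (c '' Ici a) + dist w (c u) :=
    fun w => h.abs_projParam_sub_le w hu
  -- walk towards `c u` in steps of length `infDist - 1 > B`, each moving the projection by `≤ B`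
  suffices key : ∀ n : ℕ, ∀ w : X, dist w (c u) ≤ n * B →
      |projParam c (Ici a) w - u| ≤ dist w (c u) - infDist w (c '' Ici a) + 2 * B + 2 by
    obtain ⟨n, hn⟩ := exists_nat_ge (dist w (c u) / B)
    exact key n w (by rwa [div_le_iff₀ hB] at hn)
  intro n
  induction n with
  | zero =>
    intro w hw
    have hD : dist w (c u) ≤ 0 := by simpa using hw
    linarith [hgD w, hnear w]
  | succ n ih =>
    intro w hw
    rcases le_or_gt (infDist w (c '' Ici a)) (B + 1) with hg | hg
    · linarith [hgD w, hnear w]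
    obtain ⟨w₁, hww₁, hw₁u⟩ := CAT0Space.exists_dist_eq_of_le w (c u)
      (s := infDist w (c '' Ici a) - 1) (by linarith) (by linarith [hgD w])
    have hjump := hcon.abs_projParam_sub_le_of_dist_lt hB.le (w' := w₁) (by linarith)
    have hg₁ : infDist w (c '' Ici a) ≤ infDist w₁ (c '' Ici a) + dist w w₁ :=
      infDist_le_infDist_add_dist
    have := abs_sub_le (projParam c (Ici a) w) (projParam c (Ici a) w₁) u
    rcases le_or_gt (infDist w₁ (c '' Ici a)) (B + 1) with hg₁' | hg₁'
    · linarith [hnear w₁]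
    · linarith [ih w₁ (by push_cast at hw; linarith)]

theorem abs_projParam_sub_projParam_le (hcon : ContractingOn B c (Ici a)) (hB : 0 < B)
    (w w' : X) :
    |projParam c (Ici a) w - projParam c (Ici a) w'| ≤ 2 * dist w w' + 2 * B + 2 := by
  have h := hcon.1
  have h₁ := hcon.abs_projParam_sub_le_dist_sub_infDist hB w (h.le_projParam w')
  have h₂ : dist w (c (projParam c (Ici a) w')) ≤ dist w w' + infDist w' (c '' Ici a) := by
    rw [← h.dist_projParam w']
    exact dist_triangle _ _ _
  have h₃ : infDist w' (c '' Ici a) ≤ infDist w (c '' Ici a) + dist w' w :=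
    infDist_le_infDist_add_dist
  rw [dist_comm w' w] at h₃
  linarith

theorem abs_projParam_sub_le_of_dist_le_infDist_add (hcon : ContractingOn B c (Ici a))
    (hB : 0 < B) {p w : X} {κ : ℝ} (hκ : 0 ≤ κ) (hd : dist p w ≤ infDist p (c '' Ici a) + κ) :
    |projParam c (Ici a) p - projParam c (Ici a) w| ≤ 3 * B + 2 * κ + 4 := by
  rcases lt_or_ge (dist p w) (infDist p (c '' Ici a) - 1) with hnear | hfar
  · linarith [hcon.abs_projParam_sub_le_of_dist_lt hB.le (w' := w) (by linarith)]
  rcases le_or_gt (infDist p (c '' Ici a)) 1 with hsmall | hlarge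
  · linarith [hcon.abs_projParam_sub_projParam_le hB p w]
  obtain ⟨p₁, hpp₁, hp₁w⟩ := CAT0Space.exists_dist_eq_of_le p w
    (s := infDist p (c '' Ici a) - 1) (by linarith) hfar
  have hjump := hcon.abs_projParam_sub_le_of_dist_lt hB.le (w' := p₁) (by linarith)
  have htail := hcon.abs_projParam_sub_projParam_le hB p₁ w
  have := abs_sub_le (projParam c (Ici a) p) (projParam c (Ici a) p₁) (projParam c (Ici a) w)
  linarith

theorem sub_le_dist_sub_dist_of_mem_uIcc (hcon : ContractingOn B c (Ici a)) (hB : 0 < B) (w : X)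
    {t₀ u : ℝ} (ht₀ : a ≤ t₀) (hu₀ : a ≤ u) (hu : u ∈ uIcc t₀ (projParam c (Ici a) w)) :
    |u - t₀| - (2 * B + 2) ≤ dist w (c t₀) - dist w (c u) := by
  have h₁ := hcon.abs_projParam_sub_le_dist_sub_infDist hB w ht₀
  have h₂ := hcon.1.dist_le_infDist_add_abs_projParam_sub w hu₀
  have h₃ := dist_add_dist_of_mem_segment (segment_eq_uIcc t₀ _ ▸ hu)
  simp only [Real.dist_eq] at h₃
  linarith [abs_sub_comm t₀ u, abs_sub_comm u (projParam c (Ici a) w),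
    abs_sub_comm t₀ (projParam c (Ici a) w)]

end ContractingOn

section Busemann

variable {o : X} {c : ℝ → X} {η : C(X, ℝ)}

theorem tendsto_dist_sub_dist_of_tendsto_bcomp {α : Type*} {l : Filter α} {f : α → X}
    (hf : Tendsto (fun t => bcomp o (f t)) l (𝓝 η)) (z z' : X) :
    Tendsto (fun t => dist (f t) z - dist (f t) z') l (𝓝 (η z - η z')) := by
  refine (((continuous_eval_const z).tendsto η).comp hf).sub
    (((continuous_eval_const z').tendsto η).comp hf) |>.congr fun t => ?_
  simp only [Function.comp, bcomp, ContinuousMap.coe_mk]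
  ring

theorem EndsAt.apply_sub_apply_le_dist (hc : EndsAt o c η) (z z' : X) :
    η z - η z' ≤ dist z z' :=
  le_of_tendsto' (tendsto_dist_sub_dist_of_tendsto_bcomp hc z z') fun t => by
    linarith [dist_triangle (c t) z' z, dist_comm z' z]

theorem EndsAt.apply_sub_apply_of_geodesicOn (hc : EndsAt o c η) {a : ℝ}
    (h : GeodesicOn c (Ici a)) {u u' : ℝ} (hu : a ≤ u) (hu' : a ≤ u') :
    η (c u) - η (c u') = u' - u := by
  refine tendsto_nhds_unique (tendsto_dist_sub_dist_of_tendsto_bcomp hc _ _)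
    (tendsto_const_nhds.congr' ?_)
  filter_upwards [eventually_ge_atTop (max u u')] with t ht
  have hta : a ≤ t := hu.trans ((le_max_left _ _).trans ht)
  rw [h t hta u hu, h t hta u' hu', abs_of_nonneg (by linarith [le_max_left u u']),
    abs_of_nonneg (by linarith [le_max_right u u'])]
  ring

theorem ContractingOn.apply_projParam_add_infDist_le [ProperSpace X] [CAT0Space X] {B a : ℝ}
    (hcon : ContractingOn B c (Ici a)) (hB : 0 < B) (hc : EndsAt o c η) (w : X) :
    η (c (projParam c (Ici a) w)) + infDist w (c '' Ici a) - (2 * B + 2) ≤ η w := by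
  have h := hcon.1
  have hlim := ge_of_tendsto
    (tendsto_dist_sub_dist_of_tendsto_bcomp hc w (c (projParam c (Ici a) w)))
    (b := infDist w (c '' Ici a) - (2 * B + 2)) <| by
    filter_upwards [eventually_ge_atTop (projParam c (Ici a) w)] with t ht
    have hta : a ≤ t := (h.le_projParam w).trans ht
    have := hcon.abs_projParam_sub_le_dist_sub_infDist hB w hta
    rw [abs_sub_comm, abs_of_nonneg (by linarith)] at this
    rw [h t hta _ (h.le_projParam w), abs_of_nonneg (by linarith), dist_comm]
    linarith
  linarith

end Busemann

theorem ContractingOn.exists_abs_projParam_sub_le [ProperSpace X] [CAT0Space X] {B a : ℝ}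
    {o : X} {c ζ : ℝ → X} {ξ : C(X, ℝ)} (hcon : ContractingOn B c (Ici a)) (hB : 0 < B)
    (hξ : BeginsAt o ζ ξ) {t₀ : ℝ} (ht₀ : a ≤ t₀) (hmin : ∀ s ∈ Ici a, ξ (c t₀) ≤ ξ (c s)) :
    ∃ s, |projParam c (Ici a) (ζ s) - t₀| ≤ 2 * B + 3 := by
  -- if the projections of `ζ s` stayed beyond `u` as `s → -∞`, then `ξ (c u) < ξ (c t₀)`
  have hstay : ∀ u, a ≤ u → |u - t₀| = 2 * B + 3 →
      ¬ ∃ᶠ s in atBot, u ∈ uIcc t₀ (projParam c (Ici a) (ζ s)) := fun u hu hut hfreq => by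
    have := ge_of_tendsto_of_frequently
      (tendsto_dist_sub_dist_of_tendsto_bcomp hξ (c t₀) (c u))
      (hfreq.mono fun s hs => hcon.sub_le_dist_sub_dist_of_mem_uIcc hB (ζ s) ht₀ hu hs)
    linarith [hmin u hu]
  by_contra! hfar
  have : (∃ᶠ s in atBot, t₀ + (2 * B + 3) ∈ uIcc t₀ (projParam c (Ici a) (ζ s))) ∨
      ∃ᶠ s in atBot, t₀ - (2 * B + 3) ∈ uIcc t₀ (projParam c (Ici a) (ζ s)) := by
    rw [← frequently_or_distrib]
    refine Eventually.frequently (Eventually.of_forall fun s => ?_)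
    rcases lt_abs.1 (hfar s) with hs | hs
    · exact Or.inl (mem_uIcc.2 (Or.inl ⟨by linarith, by linarith⟩))
    · exact Or.inr (mem_uIcc.2 (Or.inr ⟨by linarith, by linarith⟩))
  rcases this with hfreq | hfreq
  · exact hstay _ (by linarith) (by rw [add_sub_cancel_left, abs_of_pos (by linarith)]) hfreq
  · obtain ⟨s, hs⟩ := hfreq.exists
    have := hcon.1.le_projParam (ζ s)
    refine hstay _ ?_ (by rw [sub_sub_cancel_left, abs_neg, abs_of_pos (by linarith)]) hfreq
    rcases mem_uIcc.1 hs with hs | hs <;> linarith [hs.1]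

structure IsAsymptoticLine (o : X) (B : ℝ) (γ ζ : ℝ → X) (η : C(X, ℝ)) : Prop where
  contracting : ContractingOn B γ (Ici 0)
  pos : 0 < B
  geodesic : GeodesicOn ζ univ
  endsAt_ray : EndsAt o γ η
  endsAt_line : EndsAt o ζ η

/-- `ζ σ` and `γ (σ - levelShift η γ ζ)` lie on the same horosphere centred at `η`. -/
def levelShift (η : C(X, ℝ)) (γ ζ : ℝ → X) : ℝ := η (ζ 0) - η (γ 0)

namespace IsAsymptoticLine

variable [ProperSpace X] [CAT0Space X] {o : X} {B : ℝ} {γ ζ : ℝ → X} {η : C(X, ℝ)}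

theorem projParam_sub_mem_Icc (h : IsAsymptoticLine o B γ ζ η) (σ : ℝ) :
    projParam γ (Ici 0) (ζ σ) - (σ - levelShift η γ ζ) ∈
      Icc (infDist (ζ σ) (γ '' Ici 0) - (2 * B + 2)) (infDist (ζ σ) (γ '' Ici 0)) := by
  have hγ := h.contracting.1
  have hζσ : η (ζ σ) - η (ζ 0) = 0 - σ :=
    h.endsAt_line.apply_sub_apply_of_geodesicOn (h.geodesic.mono (subset_univ (Ici (min σ 0))))
      (min_le_left _ _) (min_le_right _ _)
  have hγπ : η (γ (projParam γ (Ici 0) (ζ σ))) - η (γ 0) = 0 - projParam γ (Ici 0) (ζ σ) :=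
    h.endsAt_ray.apply_sub_apply_of_geodesicOn hγ (hγ.le_projParam _) le_rfl
  have hlow := h.contracting.apply_projParam_add_infDist_le h.pos h.endsAt_ray (ζ σ)
  have hup := h.endsAt_ray.apply_sub_apply_le_dist (ζ σ) (γ (projParam γ (Ici 0) (ζ σ)))
  rw [hγ.dist_projParam] at hup
  unfold levelShift
  constructor <;> linarith

theorem infDist_add_le (h : IsAsymptoticLine o B γ ζ η) {σ Δ : ℝ} (hΔ₀ : 0 ≤ Δ)
    (hΔ : Δ < infDist (ζ σ) (γ '' Ici 0)) :
    infDist (ζ (σ + Δ)) (γ '' Ici 0) ≤ infDist (ζ σ) (γ '' Ici 0) - Δ + 3 * B + 2 := by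
  have hjump := abs_le.1 <| h.contracting.abs_projParam_sub_le_of_dist_lt h.pos.le
    ((h.geodesic.dist_add σ hΔ₀).trans_lt hΔ)
  have h₁ := h.projParam_sub_mem_Icc σ
  have h₂ := h.projParam_sub_mem_Icc (σ + Δ)
  linarith [h₁.2, h₂.1]

theorem exists_infDist_add_le (h : IsAsymptoticLine o B γ ζ η) {θ : ℝ} (hθ : 3 * B + 3 ≤ θ)
    {σ : ℝ} (hσ : infDist (ζ σ) (γ '' Ici 0) ≤ θ) :
    ∃ Δ, 0 < Δ ∧ Δ ≤ θ ∧ infDist (ζ (σ + Δ)) (γ '' Ici 0) ≤ θ := by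
  have hB := h.pos
  rcases le_or_gt (infDist (ζ σ) (γ '' Ici 0)) 1 with hnear | hfar
  · refine ⟨θ - 1, by linarith, by linarith, ?_⟩
    have := infDist_le_infDist_add_dist (x := ζ (σ + (θ - 1))) (y := ζ σ) (s := γ '' Ici 0)
    rw [dist_comm, h.geodesic.dist_add σ (by linarith)] at this
    linarith
  · refine ⟨infDist (ζ σ) (γ '' Ici 0) - 1, by linarith, by linarith, ?_⟩
    linarith [h.infDist_add_le (σ := σ) (Δ := infDist (ζ σ) (γ '' Ici 0) - 1) (by linarith)
      (by linarith)]

theorem exists_dist_le_of_mem_projSetBdry (h : IsAsymptoticLine o B γ ζ η) {ξ : C(X, ℝ)}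
    (hξ : BeginsAt o ζ ξ) {x : X} (hx : x ∈ projSetBdry γ (Ici 0) ξ) :
    ∃ t, dist (ζ t) x ≤ 9 * B + 6 := by
  obtain ⟨t₀, ht₀, rfl, hmin⟩ := hx
  have hB := h.pos
  obtain ⟨s, hs⟩ := h.contracting.exists_abs_projParam_sub_le hB hξ ht₀ hmin
  have hdist : ∀ σ, dist (ζ σ) (γ t₀) ≤
      infDist (ζ σ) (γ '' Ici 0) + |projParam γ (Ici 0) (ζ σ) - t₀| :=
    fun σ => h.contracting.1.dist_le_infDist_add_abs_projParam_sub _ ht₀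
  rcases le_or_gt (infDist (ζ s) (γ '' Ici 0)) 1 with hnear | hfar
  · exact ⟨s, by linarith [hdist s]⟩
  set Δ := infDist (ζ s) (γ '' Ici 0) - 1
  have hjump := abs_le.1 <| h.contracting.abs_projParam_sub_le_of_dist_lt hB.le
    ((h.geodesic.dist_add s (by linarith : 0 ≤ Δ)).trans_lt (by linarith))
  have hclose := h.infDist_add_le (σ := s) (Δ := Δ) (by linarith) (by linarith)
  have hwin : |projParam γ (Ici 0) (ζ (s + Δ)) - t₀| ≤ 3 * B + 3 := by
    have := abs_le.1 hs
    exact abs_le.2 ⟨by linarith, by linarith⟩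
  exact ⟨s + Δ, by linarith [hdist (s + Δ)]⟩

section Tail

variable {t : ℝ}

theorem infDist_le_of_le (h : IsAsymptoticLine o B γ ζ η)
    (ht : infDist (ζ t) (γ '' Ici 0) ≤ 9 * B + 6) {σ : ℝ} (hσ : t ≤ σ) :
    infDist (ζ σ) (γ '' Ici 0) ≤ 18 * B + 12 := by
  have := (h.geodesic.lipschitzWith_infDist _).le_add_of_gaps_le
    (fun σ hσ => h.exists_infDist_add_le (by linarith [h.pos]) hσ) ht hσ
  linarith

theorem abs_projParam_sub_le (h : IsAsymptoticLine o B γ ζ η)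
    (ht : infDist (ζ t) (γ '' Ici 0) ≤ 9 * B + 6) {σ : ℝ} (hσ : t ≤ σ) :
    |projParam γ (Ici 0) (ζ σ) - (σ - levelShift η γ ζ)| ≤ 18 * B + 12 := by
  have h₁ := h.projParam_sub_mem_Icc σ
  have h₂ := h.infDist_le_of_le ht hσ
  have h₃ : 0 ≤ infDist (ζ σ) (γ '' Ici 0) := infDist_nonneg
  rw [abs_le]
  constructor <;> linarith [h₁.1, h₁.2, h.pos]

theorem infDist_tail_le (h : IsAsymptoticLine o B γ ζ η)
    (ht : infDist (ζ t) (γ '' Ici 0) ≤ 9 * B + 6) (w : X) :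
    infDist w (ζ '' Ici t) ≤ infDist w (γ '' Ici 0) +
      max (t - levelShift η γ ζ - projParam γ (Ici 0) w) 0 + (36 * B + 24) := by
  have hγ := h.contracting.1
  set σ := max t (projParam γ (Ici 0) w + levelShift η γ ζ)
  have hσ : t ≤ σ := le_max_left _ _
  have h₁ : infDist w (ζ '' Ici t) ≤ dist w (ζ σ) := infDist_le_dist_of_mem (mem_image_of_mem ζ hσ)
  have h₂ := dist_triangle4 w (γ (projParam γ (Ici 0) w)) (γ (projParam γ (Ici 0) (ζ σ))) (ζ σ)
  rw [hγ.dist_projParam, hγ _ (hγ.le_projParam _) _ (hγ.le_projParam _), dist_comm (γ _),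
    hγ.dist_projParam] at h₂
  have h₃ := h.abs_projParam_sub_le ht hσ
  have h₄ := h.infDist_le_of_le ht hσ
  have h₅ : |projParam γ (Ici 0) w - (σ - levelShift η γ ζ)| =
      max (t - levelShift η γ ζ - projParam γ (Ici 0) w) 0 := by
    rcases le_total t (projParam γ (Ici 0) w + levelShift η γ ζ) with hle | hle
    · rw [show σ = _ from max_eq_right hle, max_eq_right (by linarith), add_sub_cancel_right,
        sub_self, abs_zero]
    · rw [show σ = t from max_eq_left hle, max_eq_left (by linarith), abs_sub_comm,
        abs_of_nonneg (by linarith)]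
  have h₆ := abs_sub_le (projParam γ (Ici 0) w) (σ - levelShift η γ ζ)
    (projParam γ (Ici 0) (ζ σ))
  rw [h₅, abs_sub_comm (σ - _)] at h₆
  linarith

theorem projParam_le_add_of_projParam_le (h : IsAsymptoticLine o B γ ζ η)
    (ht : infDist (ζ t) (γ '' Ici 0) ≤ 9 * B + 6) {z w : X}
    (hzw : dist z w ≤ infDist z (ζ '' Ici t))
    (hz : projParam γ (Ici 0) z ≤ t - levelShift η γ ζ) :
    projParam γ (Ici 0) w ≤ t - levelShift η γ ζ + (77 * B + 58) := by
  have hcon := h.contracting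
  rcases le_or_gt (projParam γ (Ici 0) w) (t - levelShift η γ ζ) with hw | hw
  · linarith [h.pos]
  obtain ⟨c, hc₀, hc₁, hc⟩ := CAT0Space.exists_geodesic z w
  -- along `[z, w]` the projection to `γ` crosses the level `t - levelShift η γ ζ` coarsely
  obtain ⟨τ, hτ, hpτ, hpτ'⟩ := exists_lt_le_of_le_add_abs_sub
    (f := fun τ => projParam γ (Ici 0) (c τ)) (K := 2 * B + 2) dist_nonneg zero_le_two
    (fun x hx y hy => by
      have := hcon.abs_projParam_sub_projParam_le h.pos (c x) (c y)
      rw [hc x hx y hy] at this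
      linarith [neg_abs_le (projParam γ (Ici 0) (c x) - projParam γ (Ici 0) (c y))])
    (by simpa only [hc₀] using hz) (by simpa only [hc₁] using hw)
  have hzp : dist z (c τ) = τ := by
    rw [← hc₀, hc 0 ⟨le_rfl, dist_nonneg⟩ τ hτ, zero_sub, abs_neg, abs_of_nonneg hτ.1]
  have hpw : dist (c τ) w = dist z w - τ := by
    conv_lhs => rw [← hc₁]
    rw [hc τ hτ _ ⟨dist_nonneg, le_rfl⟩, abs_sub_comm, abs_of_nonneg (sub_nonneg.2 hτ.2)]
  have hpZ : dist (c τ) w ≤ infDist (c τ) (ζ '' Ici t) := by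
    have := infDist_le_infDist_add_dist (x := z) (y := c τ) (s := ζ '' Ici t)
    linarith
  have hU := h.infDist_tail_le ht (c τ)
  rw [max_eq_right (by linarith)] at hU
  have := hcon.abs_projParam_sub_le_of_dist_le_infDist_add h.pos (κ := 36 * B + 24)
    (by linarith [h.pos]) (hpZ.trans (by linarith))
  linarith [abs_le.1 this]

theorem abs_projParam_tail_sub_le (h : IsAsymptoticLine o B γ ζ η)
    (ht : infDist (ζ t) (γ '' Ici 0) ≤ 9 * B + 6) (w : X) :
    |projParam ζ (Ici t) w - t - max (projParam γ (Ici 0) w - (t - levelShift η γ ζ)) 0| ≤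
      74 * B + 50 := by
  have hγ := h.contracting.1
  have hZ : GeodesicOn ζ (Ici t) := h.geodesic.mono (subset_univ _)
  set s := projParam ζ (Ici t) w
  have hts : t ≤ s := hZ.le_projParam w
  have hq := abs_le.1 (h.abs_projParam_sub_le ht hts)
  have hg := h.infDist_le_of_le ht hts
  have hU := h.infDist_tail_le ht w
  have hL := abs_le.1 <| h.contracting.abs_projParam_sub_le_dist_sub_infDist h.pos w
    (hγ.le_projParam (ζ s))
  have htri : dist w (γ (projParam γ (Ici 0) (ζ s))) ≤
      infDist w (ζ '' Ici t) + infDist (ζ s) (γ '' Ici 0) := by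
    rw [← hZ.dist_projParam w, ← hγ.dist_projParam (ζ s)]
    exact dist_triangle _ _ _
  rcases le_total (t - levelShift η γ ζ) (projParam γ (Ici 0) w) with hhigh | hlow
  · rw [max_eq_right (by linarith)] at hU
    rw [max_eq_left (by linarith), abs_le]
    constructor <;> linarith
  · rw [max_eq_left (by linarith)] at hU
    rw [max_eq_right (by linarith), sub_zero, abs_of_nonneg (by linarith)]
    linarith

theorem abs_max_sub_max_le (h : IsAsymptoticLine o B γ ζ η)
    (ht : infDist (ζ t) (γ '' Ici 0) ≤ 9 * B + 6) {z w : X}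
    (hzw : dist z w ≤ infDist z (ζ '' Ici t)) :
    |max (projParam γ (Ici 0) w - (t - levelShift η γ ζ)) 0 -
      max (projParam γ (Ici 0) z - (t - levelShift η γ ζ)) 0| ≤ 77 * B + 58 := by
  have hB := h.pos
  rcases le_total (t - levelShift η γ ζ) (projParam γ (Ici 0) z) with hz | hz
  · have hU := h.infDist_tail_le ht z
    rw [max_eq_right (by linarith)] at hU
    have hzw' := h.contracting.abs_projParam_sub_le_of_dist_le_infDist_add hB
      (κ := 36 * B + 24) (by linarith) (hzw.trans (by linarith))
    have hmax := abs_max_sub_max_le_abs (projParam γ (Ici 0) w - (t - levelShift η γ ζ))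
      (projParam γ (Ici 0) z - (t - levelShift η γ ζ)) 0
    rw [sub_sub_sub_cancel_right] at hmax
    linarith [abs_sub_comm (projParam γ (Ici 0) w) (projParam γ (Ici 0) z)]
  · have hcross := h.projParam_le_add_of_projParam_le ht hzw hz
    rw [max_eq_right (sub_nonpos.2 hz), sub_zero, abs_of_nonneg (le_max_right _ _)]
    exact max_le (by linarith) (by linarith)

theorem contractingOn_Ici (h : IsAsymptoticLine o B γ ζ η)
    (ht : infDist (ζ t) (γ '' Ici 0) ≤ 9 * B + 6) :
    ContractingOn (302 * B + 216) ζ (Ici t) := by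
  have hZ : GeodesicOn ζ (Ici t) := h.geodesic.mono (subset_univ _)
  refine ⟨hZ, fun z r hdisj => ediam_le ?_⟩
  intro p₁ hp₁ p₂ hp₂
  obtain ⟨w₁, hw₁, hp₁⟩ := mem_iUnion₂.1 hp₁
  obtain ⟨w₂, hw₂, hp₂⟩ := mem_iUnion₂.1 hp₂
  have hr : r ≤ infDist z (ζ '' Ici t) :=
    (le_infDist (nonempty_Ici.image ζ)).2 fun y hy =>
      (not_le.1 fun hyr => disjoint_left.1 hdisj (mem_closedBall'.2 hyr) hy).le
  have hzw₁ : dist z w₁ ≤ infDist z (ζ '' Ici t) := (mem_closedBall'.1 hw₁).trans hr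
  have hzw₂ : dist z w₂ ≤ infDist z (ζ '' Ici t) := (mem_closedBall'.1 hw₂).trans hr
  rw [hZ.eq_projParam_of_mem_projSet hp₁, hZ.eq_projParam_of_mem_projSet hp₂, edist_dist,
    hZ _ (hZ.le_projParam _) _ (hZ.le_projParam _)]
  refine ENNReal.ofReal_le_ofReal ?_
  have k₁ := abs_le.1 (h.abs_projParam_tail_sub_le ht w₁)
  have k₂ := abs_le.1 (h.abs_projParam_tail_sub_le ht w₂)
  have m₁ := abs_le.1 (h.abs_max_sub_max_le ht hzw₁)
  have m₂ := abs_le.1 (h.abs_max_sub_max_le ht hzw₂)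
  rw [abs_le]
  constructor <;> linarith

end Tail

end IsAsymptoticLine

/-- Lemma `localray`. For every `B > 0` there is `C = C(B) > B` such that
for every `B`-contracting ray `γ : [0,∞) → X` in a proper CAT(0)-space and every boundary
point `ξ ≠ γ(∞)`, every geodesic `ζ` connecting `ξ` to `γ(∞)` passes through the
`(9B+6)`-neighborhood of every point `x ∈ π_{γ[0,∞)}(ξ)`, and if `d(ζ(t), x) ≤ 9B+6` then
the ray `ζ[t,∞)` is `C`-contracting. -/
theorem contracting_ray_projection_and_contraction :
    ∀ B : ℝ, 0 < B → ∃ C : ℝ, B < C ∧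
      ∀ (X : Type) [MetricSpace X] [ProperSpace X] [CAT0Space X],
        ∀ (o : X) (γ : ℝ → X), ContractingOn B γ (Set.Ici 0) →
        ∀ ξ η : C(X, ℝ), EndsAt o γ η → ξ ∈ bdry o → ξ ≠ η →
        ∀ ζ : ℝ → X, GeodesicOn ζ Set.univ → BeginsAt o ζ ξ → EndsAt o ζ η →
        ∀ x ∈ projSetBdry γ (Set.Ici 0) ξ,
          (∃ t : ℝ, dist (ζ t) x ≤ 9 * B + 6) ∧
          ∀ t : ℝ, dist (ζ t) x ≤ 9 * B + 6 → ContractingOn C ζ (Set.Ici t) := by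
  intro B hB
  refine ⟨302 * B + 216, by linarith, ?_⟩
  intro X _ _ _ o γ hcon ξ η hγ _ _ ζ hζ hζξ hζη x hx
  have h : IsAsymptoticLine o B γ ζ η := ⟨hcon, hB, hζ, hγ, hζη⟩
  have hxγ : x ∈ γ '' Ici 0 := by
    obtain ⟨t₀, ht₀, rfl, -⟩ := hx
    exact mem_image_of_mem γ ht₀
  exact ⟨h.exists_dist_le_of_mem_projSetBdry hζξ hx,
    fun t ht => h.contractingOn_Ici ((infDist_le_dist_of_mem hxγ).trans ht)⟩

end
end

section
/- For any two oriented geodesics ζ₁, ζ₂ in a proper CAT(0)-space X which share at most one endpoint in ∂X, and any x ∈ X, the function τ_B satisfies: (1) τ_B(x, ζ₁, ζ₂) = τ_B(x, ζ₂, ζ₁); (2) if ζ̂_i denotes the geodesic obtained from ζ_i by reversing the orientation, then τ_B(x, ζ̂₁, ζ̂₂) = τ_B(x, ζ₁, ζ₂); (3) τ_B(x, ζ₁, ζ₂) ≤ τ_B(y, ζ₁, ζ₂) + d(x, y) for all x, y ∈ X. -/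
open Metric Set Filter Topology
open scoped ENNReal Classical Pointwise

noncomputable section

universe u

variable {X : Type u} [MetricSpace X]

/-!
Iterating the CN inequality at the dyadic points between `s` and `t` on a geodesic `γ` shows
that a minimiser `s` of `v ↦ d(x, γ v)` satisfies `d(x, γ s)² + (t - s)² ≤ d(x, γ t)²`. Together
with the CAT(0) four-point inequality this makes the projection to a geodesic unique and
`1`-Lipschitz, so the distances `d(x_i, ζ_i(a_i))`, `d(x_i, ζ_i(b_i))` are `1`-Lipschitz in `x`.
If `x_i` lies in `ζ_i[a_i, b_i]` but `y_i` does not, an end of `[a_i, b_i]` lies between them,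
hence within `d(x, y)` of `x_i`. Symmetry is a relabelling of the data defining `τ_B`; reversing
both geodesics negates all parameters, which exchanges the roles of `a_i` and `b_i`.
-/

theorem dist_eq_infDist_image_iff_isMinOn {γ : ℝ → X} {J : Set ℝ} {t : ℝ} (ht : t ∈ J)
    (x : X) : dist x (γ t) = infDist x (γ '' J) ↔ IsMinOn (fun v => dist x (γ v)) J t := by
  refine ⟨fun h => isMinOn_iff.2 fun v hv => h ▸ infDist_le_dist_of_mem (mem_image_of_mem γ hv),
    fun h => le_antisymm ?_ (infDist_le_dist_of_mem (mem_image_of_mem γ ht))⟩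
  rw [le_infDist (nonempty_of_mem (mem_image_of_mem γ ht))]
  rintro _ ⟨v, hv, rfl⟩
  exact isMinOn_iff.1 h v hv

theorem GeodesicOn.exists_isMinOn_dist {γ : ℝ → X} {J : Set ℝ} (hγ : GeodesicOn γ J)
    (hJ : IsClosed J) (hne : J.Nonempty) (x : X) :
    ∃ s ∈ J, IsMinOn (fun v => dist x (γ v)) J s := by
  obtain ⟨t₀, ht₀⟩ := hne
  have hcont : ContinuousOn (fun v => dist x (γ v)) J :=
    (LipschitzOnWith.of_dist_le_mul (K := 1) fun a ha b hb => by
      simpa [← hγ a ha b hb, Real.dist_eq] using dist_dist_dist_le_right x (γ a) (γ b)).continuousOn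
  refine hcont.exists_isMinOn' hJ ht₀ ?_
  have hfar := (isCompact_closedBall t₀ (2 * dist x (γ t₀))).compl_mem_cocompact
  filter_upwards [mem_inf_of_left hfar, mem_inf_of_right (mem_principal_self J)] with v hv hvJ
  have hv' : 2 * dist x (γ t₀) < dist v t₀ := by simpa using hv
  have := dist_triangle_left (γ v) (γ t₀) x
  rw [hγ v hvJ t₀ ht₀, ← Real.dist_eq] at this
  linarith

theorem GeodesicOn.dist_le_of_mem_uIcc {γ : ℝ → X} {J : Set ℝ} (hγ : GeodesicOn γ J)
    (hJ : J.OrdConnected) {p q z : ℝ} (hp : p ∈ J) (hq : q ∈ J) (hz : z ∈ uIcc p q) :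
    dist (γ p) (γ z) ≤ dist (γ p) (γ q) := by
  rw [hγ p hp z (hJ.uIcc_subset hp hq hz), hγ p hp q hq, abs_sub_comm p z, abs_sub_comm p q]
  exact abs_sub_left_of_mem_uIcc hz

/-- For `[a, b]` the closed hull of `N`, `endGap γ N p` is `min {d(γ p, γ a), d(γ p, γ b)}` and
`InBounds N p` is `p ∈ [a, b]`, written as in `tauB`: an infinite end contributes `⊤` to the
minimum and `∓∞` to the bounds. -/
def endGap (γ : ℝ → X) (N : Set ℝ) (p : ℝ) : ℝ≥0∞ :=
  min (if BddBelow N then ENNReal.ofReal (dist (γ p) (γ (sInf N))) else ⊤)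
    (if BddAbove N then ENNReal.ofReal (dist (γ p) (γ (sSup N))) else ⊤)

def InBounds (N : Set ℝ) (p : ℝ) : Prop :=
  (if BddBelow N then ((sInf N : ℝ) : EReal) else ⊥) ≤ (p : EReal) ∧
    (p : EReal) ≤ if BddAbove N then ((sSup N : ℝ) : EReal) else ⊤

theorem endGap_le_add_edist (γ : ℝ → X) (N : Set ℝ) (p q : ℝ) :
    endGap γ N p ≤ endGap γ N q + edist (γ p) (γ q) := by
  have hend : ∀ (c : Prop) [Decidable c] (z : X),
      (if c then ENNReal.ofReal (dist (γ p) z) else ⊤) ≤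
        (if c then ENNReal.ofReal (dist (γ q) z) else ⊤) + edist (γ p) (γ q) := by
    intro c _ z
    split_ifs
    · rw [← edist_dist, ← edist_dist, add_comm]
      exact edist_triangle _ _ _
    · exact le_top
  rw [endGap, endGap, ← min_add_add_right]
  exact min_le_min (hend _ _) (hend _ _)

theorem GeodesicOn.endGap_le_of_not_inBounds {γ : ℝ → X} {J : Set ℝ} (hγ : GeodesicOn γ J)
    (hJ : J.OrdConnected) {N : Set ℝ} {p q : ℝ} (hp : p ∈ J) (hq : q ∈ J)
    (hpN : InBounds N p) (hqN : ¬InBounds N q) :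
    endGap γ N p ≤ ENNReal.ofReal (dist (γ p) (γ q)) := by
  obtain ⟨hpa, hpb⟩ := hpN
  rcases not_and_or.1 hqN with hqa | hqb
  · have hb : BddBelow N := by
      by_contra h
      simp [h] at hqa
    rw [if_pos hb, EReal.coe_le_coe_iff] at hpa hqa
    refine (min_le_left _ _).trans ?_
    rw [if_pos hb]
    exact ENNReal.ofReal_le_ofReal
      (hγ.dist_le_of_mem_uIcc hJ hp hq (mem_uIcc.2 (Or.inr ⟨(not_le.1 hqa).le, hpa⟩)))
  · have hb : BddAbove N := by
      by_contra h
      simp [h] at hqb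
    rw [if_pos hb, EReal.coe_le_coe_iff] at hpb hqb
    refine (min_le_right _ _).trans ?_
    rw [if_pos hb]
    exact ENNReal.ofReal_le_ofReal
      (hγ.dist_le_of_mem_uIcc hJ hp hq (mem_uIcc.2 (Or.inl ⟨hpb, (not_le.1 hqb).le⟩)))

theorem ite_toReal_le_ite_toReal_add {p q : Prop} [Decidable p] [Decidable q] {a b : ℝ≥0∞}
    {d : ℝ} (hd : 0 ≤ d) (hpq : p → q → a ≤ b + ENNReal.ofReal d ∧ b ≤ a + ENNReal.ofReal d)
    (hp : p → ¬q → a ≤ ENNReal.ofReal d) :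
    (if p then a.toReal else 0) ≤ (if q then b.toReal else 0) + d := by
  split_ifs with hp' hq'
  · obtain ⟨hab, hba⟩ := hpq hp' hq'
    have hb : b = ⊤ → a = ⊤ := fun hb => by
      simpa [hb, ENNReal.add_eq_top] using hba
    simpa [ENNReal.toReal_ofReal hd] using ENNReal.toReal_le_add' hab hb (by simp)
  · simpa using ENNReal.toReal_le_of_le_ofReal hd (hp hp' hq')
  · positivity
  · simpa using hd

theorem EReal.ite_neg_else_bot (c : Prop) [Decidable c] (a : EReal) :
    (if c then -a else ⊥) = -(if c then a else ⊤) := by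
  split_ifs <;> simp

theorem EReal.ite_neg_else_top (c : Prop) [Decidable c] (a : EReal) :
    (if c then -a else ⊤) = -(if c then a else ⊥) := by
  split_ifs <;> simp

theorem tauB_comm (B : ℝ) (x : X) (ζ₁ : ℝ → X) (J₁ : Set ℝ) (ζ₂ : ℝ → X) (J₂ : Set ℝ) :
    tauB B x ζ₁ J₁ ζ₂ J₂ = tauB B x ζ₂ J₂ ζ₁ J₁ := by
  simp only [tauB]
  exact if_congr (by tauto) (by rw [min_comm]) rfl

theorem GeodesicOn.comp_neg {γ : ℝ → X} {J : Set ℝ} (hγ : GeodesicOn γ J) :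
    GeodesicOn (fun t => γ (-t)) (-J) := by
  intro s hs t ht
  rw [hγ _ hs _ ht, neg_sub_neg, abs_sub_comm]

theorem nearSet_comp_neg (B : ℝ) (ζ₁ : ℝ → X) (J₁ : Set ℝ) (ζ₂ : ℝ → X) (J₂ : Set ℝ) :
    nearSet B (fun t => ζ₁ (-t)) (-J₁) (fun t => ζ₂ (-t)) (-J₂) = -nearSet B ζ₁ J₁ ζ₂ J₂ := by
  have himage : (fun t => ζ₂ (-t)) '' (-J₂) = ζ₂ '' J₂ := by
    rw [← image_neg_eq_neg, image_image]
    simp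
  ext t
  simp [nearSet, himage]

section CAT0

variable [CAT0Space X]

theorem CAT0Space.exists_midpoint (y z : X) :
    ∃ m, dist y m = dist y z / 2 ∧ dist z m = dist y z / 2 := by
  obtain ⟨γ, hγ₀, hγ₁, hγ⟩ := CAT0Space.exists_geodesic y z
  have hd : 0 ≤ dist y z := dist_nonneg
  have hmid : dist y z / 2 ∈ Icc 0 (dist y z) := ⟨by linarith, by linarith⟩
  refine ⟨γ (dist y z / 2), ?_, ?_⟩
  · have := hγ 0 ⟨le_rfl, hd⟩ _ hmid
    rw [hγ₀] at this
    rw [this, abs_of_nonpos (by linarith)]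
    ring
  · have := hγ (dist y z) ⟨hd, le_rfl⟩ _ hmid
    rw [hγ₁] at this
    rw [this, abs_of_nonneg (by linarith)]
    ring

theorem CAT0Space.sq_dist_add_sq_dist_le (a b c d : X) :
    dist a c ^ 2 + dist b d ^ 2 ≤
      dist a b ^ 2 + dist b c ^ 2 + dist c d ^ 2 + dist d a ^ 2 := by
  obtain ⟨m, hbm, hdm⟩ := CAT0Space.exists_midpoint b d
  have ha := CAT0Space.cn_ineq a b d m hbm hdm
  have hc := CAT0Space.cn_ineq c b d m hbm hdm
  have hac : dist a c ^ 2 ≤ 2 * dist a m ^ 2 + 2 * dist c m ^ 2 := by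
    nlinarith [dist_triangle_right a c m, sq_nonneg (dist a m - dist c m),
      dist_nonneg (x := a) (y := c)]
  rw [dist_comm b c, dist_comm d a]
  linarith

theorem GeodesicOn.sq_dist_midpoint_le {γ : ℝ → X} {J : Set ℝ} (hγ : GeodesicOn γ J)
    {a b : ℝ} (ha : a ∈ J) (hb : b ∈ J) (hm : (a + b) / 2 ∈ J) (x : X) :
    dist x (γ ((a + b) / 2)) ^ 2 ≤
      dist x (γ a) ^ 2 / 2 + dist x (γ b) ^ 2 / 2 - (b - a) ^ 2 / 4 := by
  have hab : dist (γ a) (γ b) = |a - b| := hγ a ha b hb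
  have ham : dist (γ a) (γ ((a + b) / 2)) = dist (γ a) (γ b) / 2 := by
    rw [hγ a ha _ hm, hab, show a - (a + b) / 2 = (a - b) / 2 by ring, abs_div, abs_two]
  have hbm : dist (γ b) (γ ((a + b) / 2)) = dist (γ a) (γ b) / 2 := by
    rw [hγ b hb _ hm, hab, show b - (a + b) / 2 = -((a - b) / 2) by ring, abs_neg, abs_div,
      abs_two]
  have hcn := CAT0Space.cn_ineq x (γ a) (γ b) (γ ((a + b) / 2)) ham hbm
  rw [hab, sq_abs] at hcn
  linarith

theorem GeodesicOn.sq_dist_dyadic_le {γ : ℝ → X} {J : Set ℝ} (hγ : GeodesicOn γ J)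
    (hJ : J.OrdConnected) {s t : ℝ} (hs : s ∈ J) (ht : t ∈ J) (x : X) (n : ℕ) :
    dist x (γ (s + 2⁻¹ ^ n * (t - s))) ^ 2 - dist x (γ s) ^ 2 - (2⁻¹ ^ n * (t - s)) ^ 2 ≤
      2⁻¹ ^ n * (dist x (γ t) ^ 2 - dist x (γ s) ^ 2 - (t - s) ^ 2) := by
  have hmem : ∀ k : ℕ, s + 2⁻¹ ^ k * (t - s) ∈ J := fun k =>
    hJ.convex.add_smul_sub_mem (𝕜 := ℝ) hs ht (t := 2⁻¹ ^ k)
      ⟨by positivity, pow_le_one₀ (by norm_num) (by norm_num)⟩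
  induction n with
  | zero => simp
  | succ n ih =>
    have hhalf : s + 2⁻¹ ^ (n + 1) * (t - s) = (s + (s + 2⁻¹ ^ n * (t - s))) / 2 := by
      ring
    have hmid := hγ.sq_dist_midpoint_le hs (hmem n) (hhalf ▸ hmem (n + 1)) x
    rw [← hhalf] at hmid
    have hpow : (2⁻¹ : ℝ) ^ (n + 1) = 2⁻¹ ^ n / 2 := by ring
    rw [hpow] at hmid ⊢
    nlinarith

theorem GeodesicOn.sq_dist_add_sq_le_of_isMinOn {γ : ℝ → X} {J : Set ℝ}
    (hγ : GeodesicOn γ J) (hJ : J.OrdConnected) {s t : ℝ} (hs : s ∈ J) (ht : t ∈ J) {x : X}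
    (hmin : IsMinOn (fun v => dist x (γ v)) J s) :
    dist x (γ s) ^ 2 + (t - s) ^ 2 ≤ dist x (γ t) ^ 2 := by
  have hbound : ∀ n : ℕ, -(2⁻¹ ^ n * (t - s) ^ 2) ≤
      dist x (γ t) ^ 2 - dist x (γ s) ^ 2 - (t - s) ^ 2 := fun n => by
    have hpos : (0 : ℝ) < 2⁻¹ ^ n := by positivity
    have hle : dist x (γ s) ^ 2 ≤ dist x (γ (s + 2⁻¹ ^ n * (t - s))) ^ 2 := by
      have hs' : s + 2⁻¹ ^ n * (t - s) ∈ J :=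
        hJ.convex.add_smul_sub_mem (𝕜 := ℝ) hs ht (t := 2⁻¹ ^ n)
          ⟨hpos.le, pow_le_one₀ (by norm_num) (by norm_num)⟩
      exact pow_le_pow_left₀ dist_nonneg (isMinOn_iff.1 hmin _ hs') 2
    have := hγ.sq_dist_dyadic_le hJ hs ht x n
    nlinarith
  have hlim : Tendsto (fun n : ℕ => -(2⁻¹ ^ n * (t - s) ^ 2)) atTop (𝓝 0) := by
    simpa using ((tendsto_pow_atTop_nhds_zero_of_lt_one (by norm_num : (0 : ℝ) ≤ 2⁻¹)
      (by norm_num)).mul_const ((t - s) ^ 2)).neg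
  linarith [le_of_tendsto' hlim hbound]

theorem GeodesicOn.abs_sub_le_dist_of_isMinOn {γ : ℝ → X} {J : Set ℝ} (hγ : GeodesicOn γ J)
    (hJ : J.OrdConnected) {s t : ℝ} (hs : s ∈ J) (ht : t ∈ J) {x y : X}
    (hx : IsMinOn (fun v => dist x (γ v)) J s) (hy : IsMinOn (fun v => dist y (γ v)) J t) :
    |s - t| ≤ dist x y := by
  have hpx := hγ.sq_dist_add_sq_le_of_isMinOn hJ hs ht hx
  have hpy := hγ.sq_dist_add_sq_le_of_isMinOn hJ ht hs hy
  have hquad := CAT0Space.sq_dist_add_sq_dist_le (γ s) x y (γ t)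
  rw [hγ t ht s hs, sq_abs, dist_comm (γ s) x, dist_comm (γ s) y] at hquad
  have hsq : (s - t) ^ 2 ≤ dist x y ^ 2 := by nlinarith
  exact (sq_le_sq.1 hsq).trans_eq (abs_of_nonneg dist_nonneg)

theorem GeodesicOn.projParam_eq_of_isMinOn {γ : ℝ → X} {J : Set ℝ} (hγ : GeodesicOn γ J)
    (hJ : J.OrdConnected) {x : X} {u : ℝ} (hu : u ∈ J)
    (hmin : IsMinOn (fun v => dist x (γ v)) J u) : projParam γ J x = u := by
  have hset : {t | t ∈ J ∧ dist x (γ t) = infDist x (γ '' J)} = {u} := by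
    ext w
    constructor
    · rintro ⟨hw, hwx⟩
      have := hγ.abs_sub_le_dist_of_isMinOn hJ hw hu
        ((dist_eq_infDist_image_iff_isMinOn hw x).1 hwx) hmin
      rwa [dist_self, abs_nonpos_iff, sub_eq_zero] at this
    · rintro rfl
      exact ⟨hu, (dist_eq_infDist_image_iff_isMinOn hu x).2 hmin⟩
  rw [projParam, hset, csInf_singleton]

theorem GeodesicOn.projParam_mem_and_isMinOn {γ : ℝ → X} {J : Set ℝ} (hγ : GeodesicOn γ J)
    (hc : IsClosed J) (ho : J.OrdConnected) (hne : J.Nonempty) (x : X) :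
    projParam γ J x ∈ J ∧ IsMinOn (fun v => dist x (γ v)) J (projParam γ J x) := by
  obtain ⟨s, hs, hmin⟩ := hγ.exists_isMinOn_dist hc hne x
  rw [hγ.projParam_eq_of_isMinOn ho hs hmin]
  exact ⟨hs, hmin⟩

theorem GeodesicOn.dist_projParam_le {γ : ℝ → X} {J : Set ℝ} (hγ : GeodesicOn γ J)
    (hc : IsClosed J) (ho : J.OrdConnected) (hne : J.Nonempty) (x y : X) :
    dist (γ (projParam γ J x)) (γ (projParam γ J y)) ≤ dist x y := by
  obtain ⟨hx, hxmin⟩ := hγ.projParam_mem_and_isMinOn hc ho hne x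
  obtain ⟨hy, hymin⟩ := hγ.projParam_mem_and_isMinOn hc ho hne y
  rw [hγ _ hx _ hy]
  exact hγ.abs_sub_le_dist_of_isMinOn ho hx hy hxmin hymin

theorem GeodesicOn.projParam_comp_neg {γ : ℝ → X} {J : Set ℝ} (hγ : GeodesicOn γ J)
    (hc : IsClosed J) (ho : J.OrdConnected) (x : X) :
    projParam (fun t => γ (-t)) (-J) x = -projParam γ J x := by
  rcases J.eq_empty_or_nonempty with rfl | hne
  · simp [projParam]
  obtain ⟨hmem, hmin⟩ := hγ.projParam_mem_and_isMinOn hc ho hne x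
  refine hγ.comp_neg.projParam_eq_of_isMinOn (ho.preimage_anti fun _ _ => neg_le_neg)
    (by simpa using hmem) (isMinOn_iff.2 fun v hv => ?_)
  simpa using isMinOn_iff.1 hmin (-v) hv

theorem GeodesicOn.endGap_projParam_le_add {γ : ℝ → X} {J : Set ℝ} (hγ : GeodesicOn γ J)
    (hc : IsClosed J) (ho : J.OrdConnected) (hne : J.Nonempty) (N : Set ℝ) (x y : X) :
    endGap γ N (projParam γ J x) ≤ endGap γ N (projParam γ J y) + ENNReal.ofReal (dist x y) :=
  (endGap_le_add_edist γ N _ _).trans <| add_le_add le_rfl <|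
    (edist_dist _ _).trans_le (ENNReal.ofReal_le_ofReal (hγ.dist_projParam_le hc ho hne x y))

theorem GeodesicOn.endGap_projParam_le_of_not_inBounds {γ : ℝ → X} {J : Set ℝ}
    (hγ : GeodesicOn γ J) (hc : IsClosed J) (ho : J.OrdConnected) (hne : J.Nonempty)
    {N : Set ℝ} {x y : X} (hx : InBounds N (projParam γ J x))
    (hy : ¬InBounds N (projParam γ J y)) :
    endGap γ N (projParam γ J x) ≤ ENNReal.ofReal (dist x y) :=
  (hγ.endGap_le_of_not_inBounds ho (hγ.projParam_mem_and_isMinOn hc ho hne x).1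
    (hγ.projParam_mem_and_isMinOn hc ho hne y).1 hx hy).trans
    (ENNReal.ofReal_le_ofReal (hγ.dist_projParam_le hc ho hne x y))

theorem tauB_le_tauB_add_dist {B : ℝ} {ζ₁ ζ₂ : ℝ → X} {J₁ J₂ : Set ℝ}
    (h1 : GeodesicOn ζ₁ J₁) (h2 : GeodesicOn ζ₂ J₂) (hJ₁c : IsClosed J₁)
    (hJ₁o : J₁.OrdConnected) (hJ₂c : IsClosed J₂) (hJ₂o : J₂.OrdConnected) (x y : X) :
    tauB B x ζ₁ J₁ ζ₂ J₂ ≤ tauB B y ζ₁ J₁ ζ₂ J₂ + dist x y := by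
  set N₁ := nearSet B ζ₁ J₁ ζ₂ J₂
  set N₂ := nearSet B ζ₂ J₂ ζ₁ J₁
  have hJ₁ : N₁.Nonempty → J₁.Nonempty := Nonempty.mono fun _ ht => ht.1
  have hJ₂ : N₂.Nonempty → J₂.Nonempty := Nonempty.mono fun _ ht => ht.1
  refine ite_toReal_le_ite_toReal_add
    (a := min (endGap ζ₁ N₁ (projParam ζ₁ J₁ x)) (endGap ζ₂ N₂ (projParam ζ₂ J₂ x)))
    (b := min (endGap ζ₁ N₁ (projParam ζ₁ J₁ y)) (endGap ζ₂ N₂ (projParam ζ₂ J₂ y)))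
    dist_nonneg ?_ ?_
  · rintro ⟨hN₁, hN₂, -⟩ -
    have hlip := fun u v => (min_le_min (h1.endGap_projParam_le_add hJ₁c hJ₁o (hJ₁ hN₁) N₁ u v)
      (h2.endGap_projParam_le_add hJ₂c hJ₂o (hJ₂ hN₂) N₂ u v)).trans_eq (min_add_add_right _ _ _)
    exact ⟨hlip x y, dist_comm x y ▸ hlip y x⟩
  · rintro ⟨hN₁, hN₂, hs₁, hs₂, hx₁a, hx₁b, hx₂a, hx₂b⟩ hy
    rcases not_and_or.1 fun h : InBounds N₁ (projParam ζ₁ J₁ y) ∧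
        InBounds N₂ (projParam ζ₂ J₂ y) =>
      hy ⟨hN₁, hN₂, hs₁, hs₂, h.1.1, h.1.2, h.2.1, h.2.2⟩ with hy₁ | hy₂
    · exact (min_le_left _ _).trans
        (h1.endGap_projParam_le_of_not_inBounds hJ₁c hJ₁o (hJ₁ hN₁) ⟨hx₁a, hx₁b⟩ hy₁)
    · exact (min_le_right _ _).trans
        (h2.endGap_projParam_le_of_not_inBounds hJ₂c hJ₂o (hJ₂ hN₂) ⟨hx₂a, hx₂b⟩ hy₂)

theorem tauB_comp_neg {B : ℝ} {ζ₁ ζ₂ : ℝ → X} {J₁ J₂ : Set ℝ}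
    (h1 : GeodesicOn ζ₁ J₁) (h2 : GeodesicOn ζ₂ J₂) (hJ₁c : IsClosed J₁)
    (hJ₁o : J₁.OrdConnected) (hJ₂c : IsClosed J₂) (hJ₂o : J₂.OrdConnected) (x : X) :
    tauB B x (fun t => ζ₁ (-t)) ((fun t : ℝ => -t) '' J₁)
      (fun t => ζ₂ (-t)) ((fun t : ℝ => -t) '' J₂) = tauB B x ζ₁ J₁ ζ₂ J₂ := by
  simp only [image_neg_eq_neg, tauB, nearSet_comp_neg, nonempty_neg, bddBelow_neg, bddAbove_neg, Real.sInf_neg,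
    Real.sSup_neg, neg_neg, h1.projParam_comp_neg hJ₁c hJ₁o, h2.projParam_comp_neg hJ₂c hJ₂o,
    EReal.coe_neg, EReal.ite_neg_else_bot, EReal.ite_neg_else_top, EReal.neg_lt_neg_iff,
    EReal.neg_le_neg_iff]
  exact if_congr (by tauto)
    (congrArg ENNReal.toReal (congrArg₂ min (min_comm _ _) (min_comm _ _))) rfl

end CAT0

theorem tauB_symm_reverse_lipschitz_general
    {X : Type} [MetricSpace X] [CAT0Space X]
    (B : ℝ) (ζ₁ ζ₂ : ℝ → X) (J₁ J₂ : Set ℝ)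
    (h1 : GeodesicOn ζ₁ J₁) (h2 : GeodesicOn ζ₂ J₂)
    (hJ₁c : IsClosed J₁) (hJ₁o : J₁.OrdConnected)
    (hJ₂c : IsClosed J₂) (hJ₂o : J₂.OrdConnected) :
    (∀ x : X, tauB B x ζ₁ J₁ ζ₂ J₂ = tauB B x ζ₂ J₂ ζ₁ J₁) ∧
    (∀ x : X, tauB B x (fun t => ζ₁ (-t)) ((fun t : ℝ => -t) '' J₁)
        (fun t => ζ₂ (-t)) ((fun t : ℝ => -t) '' J₂) = tauB B x ζ₁ J₁ ζ₂ J₂) ∧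
    (∀ x y : X, tauB B x ζ₁ J₁ ζ₂ J₂ ≤ tauB B y ζ₁ J₁ ζ₂ J₂ + dist x y) :=
  ⟨fun x => tauB_comm B x ζ₁ J₁ ζ₂ J₂, tauB_comp_neg h1 h2 hJ₁c hJ₁o hJ₂c hJ₂o,
    tauB_le_tauB_add_dist h1 h2 hJ₁c hJ₁o hJ₂c hJ₂o⟩

/-- Lemma `taubfirst`. For two oriented geodesics in a proper CAT(0)-space
sharing at most one endpoint at infinity, the function `τ_B` is symmetric, invariant under
simultaneously reversing both orientations, and `1`-Lipschitz in the basepoint. -/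
theorem tauB_symm_reverse_lipschitz
    {X : Type} [MetricSpace X] [ProperSpace X] [CAT0Space X] (o : X)
    (B : ℝ) (hB : 0 < B) (ζ₁ ζ₂ : ℝ → X) (J₁ J₂ : Set ℝ)
    (h1 : GeodesicOn ζ₁ J₁) (h2 : GeodesicOn ζ₂ J₂)
    (hJ₁c : IsClosed J₁) (hJ₁o : J₁.OrdConnected)
    (hJ₂c : IsClosed J₂) (hJ₂o : J₂.OrdConnected)
    (hshare : ShareAtMostOneEnd o ζ₁ ζ₂) :
    (∀ x : X, tauB B x ζ₁ J₁ ζ₂ J₂ = tauB B x ζ₂ J₂ ζ₁ J₁) ∧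
    (∀ x : X, tauB B x (fun t => ζ₁ (-t)) ((fun t : ℝ => -t) '' J₁)
        (fun t => ζ₂ (-t)) ((fun t : ℝ => -t) '' J₂) = tauB B x ζ₁ J₁ ζ₂ J₂) ∧
    (∀ x y : X, tauB B x ζ₁ J₁ ζ₂ J₂ ≤ tauB B y ζ₁ J₁ ζ₂ J₂ + dist x y) :=
  tauB_symm_reverse_lipschitz_general B ζ₁ ζ₂ J₁ J₂ h1 h2 hJ₁c hJ₁o hJ₂c hJ₂o
end
end

section
/- Let ζ_i: J_i → X (i = 1, 2) be B-contracting geodesics in a proper CAT(0)-space X and let x ∈ X be such that τ_B(x, ζ₁, ζ₂) > 0. Then d(π_{ζ₁(J₁)}(x), π_{ζ₂(J₂)}(x)) ≤ 24B + 8. -/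
open Metric Set Filter Topology
open scoped ENNReal Classical Pointwise

noncomputable section

universe u

variable {X : Type u} [MetricSpace X]

/-! In a CAT(0) space the distance to a geodesic is convex along any other geodesic, so the
parameters where `ζᵢ` stays `(6B+2)`-close to the other geodesic form an interval
`[aᵢ, bᵢ]`; `τ_B > 0` places the projection parameter of `x` inside it. Say `x` is at least
as close to `ζ₁` as to `ζ₂`. Then its projection `m` to `ζ₁` is `(6B+2)`-close to `ζ₂` and
no farther from `x` than `ζ₂` is, and the contraction property of `ζ₂` pins `m` within
`3(6B+2) + B + 2 ≤ 24B + 8` of the projection of `x` to `ζ₂`. -/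

theorem Set.OrdConnected.add_div_two_mem {J : Set ℝ} (hJ : J.OrdConnected) {u v : ℝ}
    (hu : u ∈ J) (hv : v ∈ J) : (u + v) / 2 ∈ J := by
  rcases le_total u v with h | h
  · exact hJ.out hu hv ⟨by linarith, by linarith⟩
  · exact hJ.out hv hu ⟨by linarith, by linarith⟩

theorem Set.OrdConnected.of_add_div_two_mem {S : Set ℝ} (hS : IsClosed S)
    (hmid : ∀ u ∈ S, ∀ v ∈ S, (u + v) / 2 ∈ S) : S.OrdConnected := by
  refine ⟨fun a ha b hb p ⟨hap, hpb⟩ => ?_⟩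
  by_contra hp
  have hlo : IsClosed (S ∩ Icc a p) := hS.inter isClosed_Icc
  have hhi : IsClosed (S ∩ Icc p b) := hS.inter isClosed_Icc
  obtain ⟨huS, hau, hup⟩ :=
    hlo.csSup_mem ⟨a, ha, le_rfl, hap⟩ ⟨p, fun t ht => ht.2.2⟩
  obtain ⟨hvS, hpv, hvb⟩ :=
    hhi.csInf_mem ⟨b, hb, hpb, le_rfl⟩ ⟨p, fun t ht => ht.2.1⟩
  set u := sSup (S ∩ Icc a p)
  set v := sInf (S ∩ Icc p b)
  have hup' : u < p := hup.lt_of_ne fun h => hp (h ▸ huS)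
  have hpv' : p < v := hpv.lt_of_ne fun h => hp (h ▸ hvS)
  have hw := hmid u huS v hvS
  rcases le_total ((u + v) / 2) p with hwp | hpw
  · have : (u + v) / 2 ≤ u := le_csSup ⟨p, fun t ht => ht.2.2⟩ ⟨hw, by linarith, hwp⟩
    linarith
  · have : v ≤ (u + v) / 2 := csInf_le ⟨p, fun t ht => ht.2.1⟩ ⟨hw, hpw, by linarith⟩
    linarith

/-- The endpoints `aE`, `bE` of `tauB`: `sInf` and `sSup` in `EReal`, infinite for an
unbounded set. -/
def extendedInf (S : Set ℝ) : EReal := if BddBelow S then ((sInf S : ℝ) : EReal) else ⊥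

def extendedSup (S : Set ℝ) : EReal := if BddAbove S then ((sSup S : ℝ) : EReal) else ⊤

theorem exists_mem_le_of_extendedInf_le {S : Set ℝ} (hS : IsClosed S) (hne : S.Nonempty)
    {p : ℝ} (h : extendedInf S ≤ p) : ∃ a ∈ S, a ≤ p := by
  by_cases hb : BddBelow S
  · rw [extendedInf, if_pos hb, EReal.coe_le_coe_iff] at h
    exact ⟨_, hS.csInf_mem hne hb, h⟩
  · obtain ⟨a, ha, hap⟩ := not_bddBelow_iff.1 hb p
    exact ⟨a, ha, hap.le⟩

theorem exists_mem_ge_of_le_extendedSup {S : Set ℝ} (hS : IsClosed S) (hne : S.Nonempty)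
    {p : ℝ} (h : p ≤ extendedSup S) : ∃ b ∈ S, p ≤ b := by
  by_cases hb : BddAbove S
  · rw [extendedSup, if_pos hb, EReal.coe_le_coe_iff] at h
    exact ⟨_, hS.csSup_mem hne hb, h⟩
  · obtain ⟨b, hb, hpb⟩ := not_bddAbove_iff.1 hb p
    exact ⟨b, hb, hpb.le⟩

theorem Set.OrdConnected.mem_of_mem_Icc_extended {S : Set ℝ} (hS : S.OrdConnected)
    (hSc : IsClosed S) (hne : S.Nonempty) {p : ℝ}
    (hp : (p : EReal) ∈ Icc (extendedInf S) (extendedSup S)) : p ∈ S := by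
  obtain ⟨a, ha, hap⟩ := exists_mem_le_of_extendedInf_le hSc hne hp.1
  obtain ⟨b, hb, hpb⟩ := exists_mem_ge_of_le_extendedSup hSc hne hp.2
  exact hS.out ha hb ⟨hap, hpb⟩

namespace CAT0Space

variable [CAT0Space X]

theorem exists_dist_eq_sub (x z : X) {r : ℝ} (hr₀ : 0 ≤ r) (hr : r ≤ dist x z) :
    ∃ y, dist x y = r ∧ dist y z = dist x z - r := by
  obtain ⟨γ, hγ₀, hγ₁, hγ⟩ := exists_geodesic x z
  have hx := hγ 0 ⟨le_rfl, dist_nonneg⟩ r ⟨hr₀, hr⟩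
  have hz := hγ r ⟨hr₀, hr⟩ (dist x z) ⟨dist_nonneg, le_rfl⟩
  rw [hγ₀] at hx
  rw [hγ₁] at hz
  refine ⟨γ r, ?_, ?_⟩
  · rw [hx, zero_sub, abs_neg, abs_of_nonneg hr₀]
  · rw [hz, abs_sub_comm, abs_of_nonneg (sub_nonneg.2 hr)]

theorem exists_midpoint_s9 (y z : X) :
    ∃ m, dist y m = dist y z / 2 ∧ dist z m = dist y z / 2 := by
  obtain ⟨m, hym, hmz⟩ :=
    exists_dist_eq_sub y z (by positivity) (half_le_self dist_nonneg)
  exact ⟨m, hym, by rw [dist_comm, hmz]; ring⟩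

theorem dist_midpoint_midpoint_le_half {y z z' m n : X}
    (hym : dist y m = dist y z / 2) (hzm : dist z m = dist y z / 2)
    (hyn : dist y n = dist y z' / 2) (hz'n : dist z' n = dist y z' / 2) :
    dist m n ≤ dist z z' / 2 := by
  have hm := cn_ineq n y z m hym hzm
  have hn := cn_ineq z y z' n hyn hz'n
  rw [dist_comm n y, hyn, dist_comm n m, dist_comm n z] at hm
  rw [dist_comm z y] at hn
  refine (pow_le_pow_iff_left₀ dist_nonneg (by positivity) two_ne_zero).1 ?_
  linarith

theorem dist_midpoints_le {y z y' z' m m' : X}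
    (hym : dist y m = dist y z / 2) (hzm : dist z m = dist y z / 2)
    (hym' : dist y' m' = dist y' z' / 2) (hzm' : dist z' m' = dist y' z' / 2) :
    dist m m' ≤ (dist y y' + dist z z') / 2 := by
  obtain ⟨n, hyn, hz'n⟩ := exists_midpoint_s9 y z'
  have hmn : dist m n ≤ dist z z' / 2 := dist_midpoint_midpoint_le_half hym hzm hyn hz'n
  have hnm' : dist n m' ≤ dist y y' / 2 := by
    refine dist_midpoint_midpoint_le_half (z := y) (z' := y') (y := z') ?_ ?_ ?_ ?_ <;>
      simp only [dist_comm z' y, dist_comm z' y', *]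
  linarith [dist_triangle m n m']

end CAT0Space

namespace GeodesicOn

variable {γ : ℝ → X} {J : Set ℝ}

theorem continuousOn (hγ : GeodesicOn γ J) : ContinuousOn γ J :=
  (LipschitzOnWith.of_dist_le_mul (K := 1) fun s hs t ht => by
    simp [hγ s hs t ht, Real.dist_eq]).continuousOn

theorem isClosed_image (hγ : GeodesicOn γ J) (hJ : IsClosed J) : IsClosed (γ '' J) := by
  have : CompleteSpace J := hJ.isComplete.completeSpace_coe
  have hiso : Isometry (J.domRestrict γ) := Isometry.of_dist_eq fun s t => by
    rw [Set.domRestrict_apply, Set.domRestrict_apply, hγ s s.2 t t.2, Subtype.dist_eq,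
      Real.dist_eq]
  rw [← Set.range_domRestrict]
  exact hiso.isUniformInducing.isComplete_range.isClosed

theorem dist_add_div_two (hγ : GeodesicOn γ J) {u v : ℝ} (hu : u ∈ J) (hv : v ∈ J)
    (hw : (u + v) / 2 ∈ J) :
    dist (γ u) (γ ((u + v) / 2)) = dist (γ u) (γ v) / 2 ∧
      dist (γ v) (γ ((u + v) / 2)) = dist (γ u) (γ v) / 2 := by
  rw [hγ u hu _ hw, hγ v hv _ hw, hγ u hu v hv, show u - (u + v) / 2 = (u - v) / 2 by ring,
    show v - (u + v) / 2 = -((u - v) / 2) by ring, abs_neg, abs_div, abs_two]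
  exact ⟨rfl, rfl⟩

theorem infDist_add_div_two_le [CAT0Space X] (hγ : GeodesicOn γ J) (hJ : J.OrdConnected)
    {γ' : ℝ → X} {J' : Set ℝ} (hγ' : GeodesicOn γ' J') (hJ' : J'.OrdConnected)
    {u v : ℝ} (hu : u ∈ J) (hv : v ∈ J) :
    infDist (γ ((u + v) / 2)) (γ' '' J') ≤
      (infDist (γ u) (γ' '' J') + infDist (γ v) (γ' '' J')) / 2 := by
  rcases (γ' '' J').eq_empty_or_nonempty with hZ | hZ
  · simp [hZ]
  refine le_of_forall_pos_lt_add fun ε hε => ?_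
  obtain ⟨_, ⟨s, hs, rfl⟩, hus⟩ := (infDist_lt_iff (x := γ u) hZ).1 (lt_add_of_pos_right _ hε)
  obtain ⟨_, ⟨t, ht, rfl⟩, hvt⟩ := (infDist_lt_iff (x := γ v) hZ).1 (lt_add_of_pos_right _ hε)
  have hw' := hJ'.add_div_two_mem hs ht
  obtain ⟨huw, hvw⟩ := hγ.dist_add_div_two hu hv (hJ.add_div_two_mem hu hv)
  obtain ⟨hsw, htw⟩ := hγ'.dist_add_div_two hs ht hw'
  calc infDist (γ ((u + v) / 2)) (γ' '' J')
      ≤ dist (γ ((u + v) / 2)) (γ' ((s + t) / 2)) := infDist_le_dist_of_mem ⟨_, hw', rfl⟩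
    _ ≤ (dist (γ u) (γ' s) + dist (γ v) (γ' t)) / 2 :=
      CAT0Space.dist_midpoints_le huw hvw hsw htw
    _ < _ := by linarith

theorem apply_projParam_mem_projSet [ProperSpace X] (hγ : GeodesicOn γ J) (hJ : IsClosed J)
    (hne : J.Nonempty) (x : X) : γ (projParam γ J x) ∈ projSet (γ '' J) x := by
  set I := infDist x (γ '' J)
  set M := {t | t ∈ J ∧ dist x (γ t) = I}
  have hM : IsClosed M :=
    ((continuous_const.dist continuous_id).comp_continuousOn
      hγ.continuousOn).preimage_isClosed_of_isClosed hJ isClosed_singleton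
  obtain ⟨_, ⟨t₀, ht₀, rfl⟩, hxt₀⟩ :=
    (hγ.isClosed_image hJ).exists_infDist_eq_dist (hne.image γ) x
  have hbdd : BddBelow M := ⟨t₀ - 2 * I, fun t ht => by
    have := hγ t ht.1 t₀ ht₀
    linarith [dist_triangle_left (γ t) (γ t₀) x, neg_abs_le (t - t₀), ht.2]⟩
  have hmem := hM.csInf_mem ⟨t₀, ht₀, hxt₀.symm⟩ hbdd
  exact ⟨⟨_, hmem.1, rfl⟩, hmem.2⟩

end GeodesicOn

section nearSet

variable {B : ℝ} {ζ₁ ζ₂ : ℝ → X} {J₁ J₂ : Set ℝ}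

theorem isClosed_nearSet (hζ₁ : GeodesicOn ζ₁ J₁) (hJ₁ : IsClosed J₁) :
    IsClosed (nearSet B ζ₁ J₁ ζ₂ J₂) :=
  ((continuous_infDist_pt _).comp_continuousOn hζ₁.continuousOn).preimage_isClosed_of_isClosed
    hJ₁ isClosed_Iic

theorem ordConnected_nearSet [CAT0Space X] (hζ₁ : GeodesicOn ζ₁ J₁) (hJ₁c : IsClosed J₁)
    (hJ₁o : J₁.OrdConnected) (hζ₂ : GeodesicOn ζ₂ J₂) (hJ₂o : J₂.OrdConnected) :
    (nearSet B ζ₁ J₁ ζ₂ J₂).OrdConnected :=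
  .of_add_div_two_mem (isClosed_nearSet hζ₁ hJ₁c) fun u hu v hv =>
    ⟨hJ₁o.add_div_two_mem hu.1 hv.1,
      (hζ₁.infDist_add_div_two_le hJ₁o hζ₂ hJ₂o hu.1 hv.1).trans (by linarith [hu.2, hv.2])⟩

theorem nearSet_nonempty_and_projParam_mem_Icc_of_tauB_pos {x : X}
    (h : 0 < tauB B x ζ₁ J₁ ζ₂ J₂) :
    ((nearSet B ζ₁ J₁ ζ₂ J₂).Nonempty ∧ ((projParam ζ₁ J₁ x : ℝ) : EReal) ∈
      Icc (extendedInf (nearSet B ζ₁ J₁ ζ₂ J₂)) (extendedSup (nearSet B ζ₁ J₁ ζ₂ J₂))) ∧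
    ((nearSet B ζ₂ J₂ ζ₁ J₁).Nonempty ∧ ((projParam ζ₂ J₂ x : ℝ) : EReal) ∈
      Icc (extendedInf (nearSet B ζ₂ J₂ ζ₁ J₁)) (extendedSup (nearSet B ζ₂ J₂ ζ₁ J₁))) := by
  by_contra hc
  simp only [tauB] at h
  rw [if_neg] at h
  · exact lt_irrefl 0 h
  · rintro ⟨hN₁, hN₂, -, -, ha₁, hb₁, ha₂, hb₂⟩
    exact hc ⟨⟨hN₁, ha₁, hb₁⟩, hN₂, ha₂, hb₂⟩

theorem projParam_mem_nearSet_of_tauB_pos [CAT0Space X] {x : X}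
    (hζ₁ : GeodesicOn ζ₁ J₁) (hJ₁c : IsClosed J₁) (hJ₁o : J₁.OrdConnected)
    (hζ₂ : GeodesicOn ζ₂ J₂) (hJ₂c : IsClosed J₂) (hJ₂o : J₂.OrdConnected)
    (h : 0 < tauB B x ζ₁ J₁ ζ₂ J₂) :
    projParam ζ₁ J₁ x ∈ nearSet B ζ₁ J₁ ζ₂ J₂ ∧ projParam ζ₂ J₂ x ∈ nearSet B ζ₂ J₂ ζ₁ J₁ := by
  obtain ⟨⟨hN₁, hp₁⟩, hN₂, hp₂⟩ := nearSet_nonempty_and_projParam_mem_Icc_of_tauB_pos h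
  exact ⟨(ordConnected_nearSet hζ₁ hJ₁c hJ₁o hζ₂ hJ₂o).mem_of_mem_Icc_extended
      (isClosed_nearSet hζ₁ hJ₁c) hN₁ hp₁,
    (ordConnected_nearSet hζ₂ hJ₂c hJ₂o hζ₁ hJ₁o).mem_of_mem_Icc_extended
      (isClosed_nearSet hζ₂ hJ₂c) hN₂ hp₂⟩

end nearSet

namespace ContractingOn

variable {B : ℝ} {γ : ℝ → X} {J : Set ℝ}

theorem dist_le_of_mem_projSet (h : ContractingOn B γ J) (hB : 0 ≤ B) {x y p q : X}
    (hxy : dist x y < infDist x (γ '' J)) (hp : p ∈ projSet (γ '' J) x)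
    (hq : q ∈ projSet (γ '' J) y) : dist p q ≤ B := by
  have hdisj : Disjoint (closedBall x (dist x y)) (γ '' J) :=
    Set.disjoint_left.2 fun w hw hwγ =>
      ((mem_closedBall'.1 hw).trans_lt hxy).not_ge (infDist_le_dist_of_mem hwγ)
  have hpq := (Metric.edist_le_ediam_of_mem
    (mem_biUnion (mem_closedBall_self dist_nonneg) hp)
    (mem_biUnion (mem_closedBall'.2 le_rfl) hq)).trans (h.2 x _ hdisj)
  rwa [edist_dist, ENNReal.ofReal_le_ofReal_iff hB] at hpq

theorem dist_le_of_infDist_le [ProperSpace X] [CAT0Space X] (h : ContractingOn B γ J)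
    (hB : 0 ≤ B) (hJ : IsClosed J) {c : ℝ} {x m p : X} (hm : infDist m (γ '' J) ≤ c)
    (hxm : dist x m ≤ infDist x (γ '' J)) (hp : p ∈ projSet (γ '' J) x) :
    dist m p ≤ 3 * c + B + 2 := by
  set D := infDist x (γ '' J)
  have hZ : IsClosed (γ '' J) := h.1.isClosed_image hJ
  have hc : 0 ≤ c := infDist_nonneg.trans hm
  by_cases hD : D ≤ c + 1
  · linarith [dist_triangle m x p, dist_comm m x, hp.2]
  -- Walk from `x` towards a point `z` of the geodesic nearest to `m`, stopping at `y` just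
  -- short of distance `D`: the ball around `x` through `y` misses the geodesic, so the
  -- projection `q` of `y` lies within `B` of `p`, while `y` stays close to `z`.
  obtain ⟨z, hz, hmz⟩ := hZ.exists_infDist_eq_dist ⟨p, hp.1⟩ m
  have hxz : dist x z ≤ D + c := by linarith [dist_triangle x m z]
  have hDxz : D ≤ dist x z := infDist_le_dist_of_mem hz
  obtain ⟨y, hxy, hyz⟩ := CAT0Space.exists_dist_eq_sub x z (r := D - 1) (by linarith)
    (by linarith)
  obtain ⟨q, hq, hyq⟩ := hZ.exists_infDist_eq_dist ⟨p, hp.1⟩ y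
  have hpq : dist p q ≤ B := h.dist_le_of_mem_projSet hB (by linarith) hp ⟨hq, hyq.symm⟩
  have hyq' : dist y q ≤ dist y z := hyq ▸ infDist_le_dist_of_mem hz
  calc dist m p ≤ dist m z + dist z y + dist y q + dist q p := by
        linarith [dist_triangle4 m z y p, dist_triangle y q p]
    _ ≤ c + (c + 1) + (c + 1) + B := by
        rw [dist_comm z y, dist_comm q p]
        linarith
    _ = 3 * c + B + 2 := by ring

end ContractingOn

theorem tauB_pos_projections_close_general
    {X : Type} [MetricSpace X] [ProperSpace X] [CAT0Space X]
    (B : ℝ) (hB : 0 < B) (ζ₁ ζ₂ : ℝ → X) (J₁ J₂ : Set ℝ)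
    (h1 : ContractingOn B ζ₁ J₁) (h2 : ContractingOn B ζ₂ J₂)
    (hJ₁c : IsClosed J₁) (hJ₁o : J₁.OrdConnected)
    (hJ₂c : IsClosed J₂) (hJ₂o : J₂.OrdConnected)
    (x : X) (hpos : 0 < tauB B x ζ₁ J₁ ζ₂ J₂) :
    dist (ζ₁ (projParam ζ₁ J₁ x)) (ζ₂ (projParam ζ₂ J₂ x)) ≤ 24 * B + 8 := by
  obtain ⟨hN₁, hN₂⟩ := projParam_mem_nearSet_of_tauB_pos h1.1 hJ₁c hJ₁o h2.1 hJ₂c hJ₂o hpos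
  have hp₁ := h1.1.apply_projParam_mem_projSet hJ₁c ⟨_, hN₁.1⟩ x
  have hp₂ := h2.1.apply_projParam_mem_projSet hJ₂c ⟨_, hN₂.1⟩ x
  have hconst : 3 * (6 * B + 2) + B + 2 ≤ 24 * B + 8 := by linarith
  rcases le_total (infDist x (ζ₁ '' J₁)) (infDist x (ζ₂ '' J₂)) with h | h
  · exact (h2.dist_le_of_infDist_le hB.le hJ₂c hN₁.2 (hp₁.2.trans_le h) hp₂).trans hconst
  · rw [dist_comm]
    exact (h1.dist_le_of_infDist_le hB.le hJ₁c hN₂.2 (hp₂.2.trans_le h) hp₁).trans hconst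

/-- Lemma `tauproj`. If `ζ₁, ζ₂` are `B`-contracting geodesics in a proper
CAT(0)-space and `τ_B(x, ζ₁, ζ₂) > 0`, then the projections of `x` to the two geodesics are
at distance at most `24B + 8`. -/
theorem tauB_pos_projections_close
    {X : Type} [MetricSpace X] [ProperSpace X] [CAT0Space X] (o : X)
    (B : ℝ) (hB : 0 < B) (ζ₁ ζ₂ : ℝ → X) (J₁ J₂ : Set ℝ)
    (h1 : ContractingOn B ζ₁ J₁) (h2 : ContractingOn B ζ₂ J₂)
    (hJ₁c : IsClosed J₁) (hJ₁o : J₁.OrdConnected)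
    (hJ₂c : IsClosed J₂) (hJ₂o : J₂.OrdConnected)
    (hshare : ShareAtMostOneEnd o ζ₁ ζ₂)
    (x : X) (hpos : 0 < tauB B x ζ₁ J₁ ζ₂ J₂) :
    dist (ζ₁ (projParam ζ₁ J₁ x)) (ζ₂ (projParam ζ₂ J₂ x)) ≤ 24 * B + 8 :=
  tauB_pos_projections_close_general B hB ζ₁ ζ₂ J₁ J₂ h1 h2 hJ₁c hJ₁o hJ₂c hJ₂o x hpos

end
end
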